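/- arXiv:1301.0126 — 7 statements merged into one kernel-verified Lean document; each statement's English description precedes it below -/
import Mathlib

section
/- For every integer k with 1 ≤ k ≤ l, the greatest common divisor of ω_0, ω_1, …, ω_k equals p_{k+1}·p_{k+2}⋯p_{l+1}. -/
/-! Write `P k = p (k+1) ⋯ p (l+1)`. Induction on `k` shows `ω k = r k · P k` with `r k` coprime
to `p k`: the recursion gives `r (k+1) = q (k+1) + p (k+1) · (p k · r k - q k)`, which is
`q (k+1)` modulo `p (k+1)`. Hence adding `ω (k+1)` to the gcd `P k = p (k+1) · P (k+1)` of the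
first values leaves `gcd (r (k+1) · P (k+1), p (k+1) · P (k+1)) = P (k+1)`. -/

open Finset

lemma Finset.prod_Icc_eq_mul_prod_Icc_add_one {M : Type*} [CommMonoid M] (f : ℕ → M) {a b : ℕ}
    (h : a ≤ b) : ∏ i ∈ Icc a b, f i = f a * ∏ i ∈ Icc (a + 1) b, f i := by
  rw [Icc_add_one_left_eq_Ioc, mul_prod_Ioc_eq_prod_Icc h]

lemma gcd_mul_right_eq_of_isCoprime {r s P : ℤ} (h : IsCoprime r s) (hP : 0 ≤ P) :
    gcd (r * P) (s * P) = P := by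
  rw [_root_.gcd_mul_right, ← Int.coe_gcd, Int.isCoprime_iff_gcd_eq_one.mp h, Nat.cast_one,
    one_mul, Int.normalize_of_nonneg hP]

section PuiseuxPairs

variable {l : ℕ} {q p ω : ℕ → ℤ}

lemma prod_Icc_nonneg_of_puiseux (hp2 : ∀ k, 1 ≤ k → k ≤ l → 2 ≤ p k) (hpl1 : 1 ≤ p (l + 1))
    (m : ℕ) : 0 ≤ ∏ i ∈ Icc (m + 1) (l + 1), p i := by
  refine prod_nonneg fun i hi => ?_
  obtain ⟨hi1, hil⟩ := mem_Icc.mp hi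
  rcases hil.lt_or_eq with hil | rfl
  · linarith [hp2 i (by omega) (by omega)]
  · linarith

lemma exists_isCoprime_and_eq_mul_prod
    (hcop : ∀ k, 1 ≤ k → k ≤ l + 1 → Int.gcd (q k) (p k) = 1)
    (hω1 : ω 1 = q 1 * ∏ i ∈ Icc 2 (l + 1), p i)
    (hωrec : ∀ k, 1 ≤ k → k ≤ l →
      ω (k + 1) = p k * ω k + (q (k + 1) - q k * p (k + 1)) * ∏ i ∈ Icc (k + 2) (l + 1), p i)
    {k : ℕ} (hk1 : 1 ≤ k) (hkl : k ≤ l + 1) :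
    ∃ r, IsCoprime r (p k) ∧ ω k = r * ∏ i ∈ Icc (k + 1) (l + 1), p i := by
  induction k, hk1 using Nat.le_induction with
  | base => exact ⟨q 1, Int.isCoprime_iff_gcd_eq_one.mpr (hcop 1 le_rfl (by omega)), hω1⟩
  | succ k hk ih =>
    obtain ⟨r, -, hr⟩ := ih (by omega)
    have hcop' : IsCoprime (q (k + 1)) (p (k + 1)) :=
      Int.isCoprime_iff_gcd_eq_one.mpr (hcop (k + 1) (by omega) hkl)
    refine ⟨q (k + 1) + p (k + 1) * (p k * r - q k), hcop'.add_mul_left_left _, ?_⟩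
    rw [hωrec k hk (by omega), hr, prod_Icc_eq_mul_prod_Icc_add_one _ (by omega : k + 1 ≤ l + 1)]
    ring

end PuiseuxPairs

theorem stmt0_general (l : ℕ) (q p : ℕ → ℤ)
    (hp2 : ∀ k, 1 ≤ k → k ≤ l → 2 ≤ p k)
    (hpl1 : 1 ≤ p (l + 1))
    (hcop : ∀ k, 1 ≤ k → k ≤ l + 1 → Int.gcd (q k) (p k) = 1)
    (ω : ℕ → ℤ)
    (hω0 : ω 0 = ∏ i ∈ Finset.Icc 1 (l + 1), p i)
    (hω1 : ω 1 = q 1 * ∏ i ∈ Finset.Icc 2 (l + 1), p i)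
    (hωrec : ∀ k, 1 ≤ k → k ≤ l →
      ω (k + 1) = p k * ω k + (q (k + 1) - q k * p (k + 1)) * ∏ i ∈ Finset.Icc (k + 2) (l + 1), p i)
    (k : ℕ) (hkl : k ≤ l) :
    (Finset.range (k + 1)).gcd ω = ∏ i ∈ Finset.Icc (k + 1) (l + 1), p i := by
  have hP := prod_Icc_nonneg_of_puiseux hp2 hpl1
  induction k with
  | zero => rw [range_one, gcd_singleton, hω0, Int.normalize_of_nonneg (hP 0)]
  | succ k ih =>
    obtain ⟨r, hr, hωr⟩ := exists_isCoprime_and_eq_mul_prod hcop hω1 hωrec (k := k + 1)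
      (by omega) (by omega)
    rw [range_add_one, gcd_insert, ih (by omega), hωr,
      prod_Icc_eq_mul_prod_Icc_add_one _ (by omega : k + 1 ≤ l + 1)]
    exact gcd_mul_right_eq_of_isCoprime hr (hP (k + 1))

/-- Let `l ≥ 0` and let `(q 1, p 1), …, (q (l+1), p (l+1))` be the formal
Puiseux pairs (`p k ≥ 2` and `gcd (q k) (p k) = 1` for `1 ≤ k ≤ l`, `p (l+1) ≥ 1` and
`gcd (q (l+1)) (p (l+1)) = 1`).  Define `ω 0 = p 1 ⋯ p (l+1)`, `ω 1 = q 1 · p 2 ⋯ p (l+1)`,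
and `ω (k+1) = p k · ω k + (q (k+1) − q k · p (k+1)) · p (k+2) ⋯ p (l+1)` for `1 ≤ k ≤ l`.
Then for every `k` with `1 ≤ k ≤ l`, `gcd (ω 0, …, ω k) = p (k+1) ⋯ p (l+1)`. -/
theorem stmt0 (l : ℕ) (q p : ℕ → ℤ)
    (hp2 : ∀ k, 1 ≤ k → k ≤ l → 2 ≤ p k)
    (hpl1 : 1 ≤ p (l + 1))
    (hcop : ∀ k, 1 ≤ k → k ≤ l + 1 → Int.gcd (q k) (p k) = 1)
    (ω : ℕ → ℤ)
    (hω0 : ω 0 = ∏ i ∈ Finset.Icc 1 (l + 1), p i)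
    (hω1 : ω 1 = q 1 * ∏ i ∈ Finset.Icc 2 (l + 1), p i)
    (hωrec : ∀ k, 1 ≤ k → k ≤ l →
      ω (k + 1) = p k * ω k + (q (k + 1) - q k * p (k + 1)) * ∏ i ∈ Finset.Icc (k + 2) (l + 1), p i)
    (k : ℕ) (hk1 : 1 ≤ k) (hkl : k ≤ l) :
    (Finset.range (k + 1)).gcd ω = ∏ i ∈ Finset.Icc (k + 1) (l + 1), p i :=
  stmt0_general l q p hp2 hpl1 hcop ω hω0 hω1 hωrec k hkl
end

section
/- For every integer k with 1 ≤ k ≤ l+1, the least positive integer α such that α·ω_k lies in the subgroup ℤω_0 + ℤω_1 + ⋯ + ℤω_{k−1} of ℤ equals p_k. -/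
/-!
Put `e n = tailProd l p n = p (n + 1) ⋯ p (l + 1)`, so `ω 0 = e 0` and
`e n = p (n + 1) * e (n + 1)`. Induction along the recursion gives `ω (n + 1) = e (n + 1) * m`
with `m ≡ q (n + 1) mod p (n + 1)`, so `m` is prime to `p (n + 1)`. Then
`(e n, ω (n + 1)) = e (n + 1) * (p (n + 1), m) = (e (n + 1))`, hence `(ω 0, …, ω n) = (e n)` for
all `n ≤ l`. Finally `α * ω (n + 1)` lies in this ideal iff
`p (n + 1) * e (n + 1) ∣ α * e (n + 1) * m`, i.e. iff `p (n + 1) ∣ α`.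
-/

open Finset

section Span

variable {R : Type*} [CommRing R]

theorem Ideal.mem_span_image_range_iff (ω : ℕ → R) (k : ℕ) (x : R) :
    x ∈ Ideal.span (ω '' ↑(range k)) ↔ ∃ cf : ℕ → R, x = ∑ i ∈ range k, cf i * ω i := by
  simp only [Ideal.span, Submodule.mem_span_image_finset_iff_exists_fun', smul_eq_mul, eq_comm]

theorem Ideal.span_singleton_mul_sup_span_singleton_mul {a b : R} (h : IsCoprime a b) (c : R) :
    Ideal.span {c * a} ⊔ Ideal.span {c * b} = Ideal.span {c} := by
  rw [← Ideal.span_singleton_mul_span_singleton, ← Ideal.span_singleton_mul_span_singleton,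
    ← Ideal.mul_sup, ((Ideal.isCoprime_span_singleton_iff a b).mpr h).sup_eq, Ideal.mul_top]

theorem Ideal.span_image_range_eq_of_isCoprime (E p ω : ℕ → R) (h0 : ω 0 = E 0) :
    ∀ n, (∀ j < n, E j = p (j + 1) * E (j + 1)) →
      (∀ j < n, ∃ m, ω (j + 1) = E (j + 1) * m ∧ IsCoprime m (p (j + 1))) →
      Ideal.span (ω '' ↑(range (n + 1))) = Ideal.span {E n}
  | 0, _, _ => by simp [h0]
  | n + 1, hE, hω => by
    obtain ⟨m, hωm, hm⟩ := hω n n.lt_succ_self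
    rw [range_add_one, coe_insert, Set.image_insert_eq, Ideal.span_insert,
      span_image_range_eq_of_isCoprime E p ω h0 n (fun j hj => hE j (by omega))
        (fun j hj => hω j (by omega)), hE n n.lt_succ_self, hωm, mul_comm (p _),
      Ideal.span_singleton_mul_sup_span_singleton_mul hm]

end Span

theorem Int.isLeast_pos_mul_mem_span_singleton {p e m : ℤ} (hp : 0 < p) (he : e ≠ 0)
    (hm : IsCoprime m p) :
    IsLeast {α : ℤ | 0 < α ∧ α * (e * m) ∈ Ideal.span {p * e}} p := by
  have hmem : ∀ α : ℤ, α * (e * m) ∈ Ideal.span {p * e} ↔ p ∣ α := fun α => by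
    rw [Ideal.mem_span_singleton, show α * (e * m) = e * (α * m) by ring, mul_comm p,
      mul_dvd_mul_iff_left he]
    exact ⟨hm.symm.dvd_of_dvd_mul_right, fun h => h.mul_right m⟩
  simp only [hmem]
  exact ⟨⟨hp, dvd_rfl⟩, fun α ⟨hα, hdvd⟩ => Int.le_of_dvd hα hdvd⟩

def tailProd (l : ℕ) (p : ℕ → ℤ) (n : ℕ) : ℤ := ∏ i ∈ Icc (n + 1) (l + 1), p i

theorem tailProd_eq_mul {l n : ℕ} (p : ℕ → ℤ) (hn : n ≤ l) :
    tailProd l p n = p (n + 1) * tailProd l p (n + 1) := by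
  rw [tailProd, tailProd, ← insert_Icc_add_one_left_eq_Icc (by omega), prod_insert (by simp)]

theorem tailProd_pos {l : ℕ} {p : ℕ → ℤ} (hp : ∀ i, 1 ≤ i → i ≤ l + 1 → 0 < p i) (n : ℕ) :
    0 < tailProd l p n :=
  prod_pos fun i hi => hp i (by simp at hi; omega) (mem_Icc.mp hi).2

theorem exists_eq_tailProd_mul_isCoprime {l : ℕ} {q p ω : ℕ → ℤ}
    (hcop : ∀ k, 1 ≤ k → k ≤ l + 1 → Int.gcd (q k) (p k) = 1)
    (hω1 : ω 1 = q 1 * ∏ i ∈ Icc 2 (l + 1), p i)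
    (hωrec : ∀ k, 1 ≤ k → k ≤ l →
      ω (k + 1) = p k * ω k + (q (k + 1) - q k * p (k + 1)) * ∏ i ∈ Icc (k + 2) (l + 1), p i) :
    ∀ n ≤ l, ∃ m, ω (n + 1) = tailProd l p (n + 1) * m ∧ IsCoprime m (p (n + 1))
  | 0, _ => ⟨q 1, by rw [hω1, tailProd, mul_comm],
      Int.isCoprime_iff_gcd_eq_one.mpr (hcop 1 le_rfl (by omega))⟩
  | n + 1, hn => by
    obtain ⟨m, hωm, -⟩ := exists_eq_tailProd_mul_isCoprime hcop hω1 hωrec n (by omega)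
    have hq : IsCoprime (q (n + 2)) (p (n + 2)) :=
      Int.isCoprime_iff_gcd_eq_one.mpr (hcop (n + 2) (by omega) (by omega))
    -- `ω (n + 2) / tailProd (n + 2)` is congruent to `q (n + 2)` modulo `p (n + 2)`
    refine ⟨q (n + 2) + (p (n + 1) * m - q (n + 1)) * p (n + 2), ?_,
      hq.add_mul_right_left _⟩
    rw [hωrec (n + 1) (by omega) hn, hωm, tailProd_eq_mul p hn]
    simp only [tailProd]
    ring

/-- With the `ω`'s defined from the formal Puiseux pairs as in the context,
for every `k` with `1 ≤ k ≤ l + 1`, the least positive integer `α` such that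
`α · ω k ∈ ℤ ω 0 + ℤ ω 1 + ⋯ + ℤ ω (k-1)` equals `p k`. -/
theorem stmt2 (l : ℕ) (q p : ℕ → ℤ)
    (hp2 : ∀ k, 1 ≤ k → k ≤ l → 2 ≤ p k)
    (hpl1 : 1 ≤ p (l + 1))
    (hcop : ∀ k, 1 ≤ k → k ≤ l + 1 → Int.gcd (q k) (p k) = 1)
    (ω : ℕ → ℤ)
    (hω0 : ω 0 = ∏ i ∈ Finset.Icc 1 (l + 1), p i)
    (hω1 : ω 1 = q 1 * ∏ i ∈ Finset.Icc 2 (l + 1), p i)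
    (hωrec : ∀ k, 1 ≤ k → k ≤ l →
      ω (k + 1) = p k * ω k + (q (k + 1) - q k * p (k + 1)) * ∏ i ∈ Finset.Icc (k + 2) (l + 1), p i)
    (k : ℕ) (hk1 : 1 ≤ k) (hkl : k ≤ l + 1) :
    IsLeast {α : ℤ | 0 < α ∧ ∃ cf : ℕ → ℤ,
      α * ω k = ∑ i ∈ Finset.range k, cf i * ω i} (p k) := by
  obtain ⟨n, rfl⟩ : ∃ n, k = n + 1 := ⟨k - 1, by omega⟩
  have hp_pos : ∀ i, 1 ≤ i → i ≤ l + 1 → 0 < p i := fun i hi1 hil => by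
    rcases hil.lt_or_eq with hil | rfl
    · linarith [hp2 i hi1 (by omega)]
    · linarith
  have hfactor := exists_eq_tailProd_mul_isCoprime hcop hω1 hωrec
  have hspan : Ideal.span (ω '' ↑(range (n + 1))) = Ideal.span {tailProd l p n} :=
    Ideal.span_image_range_eq_of_isCoprime (tailProd l p) p ω hω0 n
      (fun j hj => tailProd_eq_mul p (by omega)) (fun j hj => hfactor j (by omega))
  obtain ⟨m, hωm, hm⟩ := hfactor n (by omega)
  rw [tailProd_eq_mul p (by omega)] at hspan
  have := Int.isLeast_pos_mul_mem_span_singleton (hp_pos (n + 1) (by omega) hkl)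
    (tailProd_pos hp_pos (n + 1)).ne' hm
  simpa only [← hωm, ← hspan, Ideal.mem_span_image_range_iff] using this
end

section
/- For every polynomial f ∈ K[y] there exists a unique multivariate polynomial F ∈ K[y_1,…,y_k] such that substituting y_j = f_j for all j yields F(f_1,…,f_k) = f, and such that for each j with 1 ≤ j ≤ k−1 the degree of F in the variable y_j is strictly less than p_j. -/
/-!
Call an exponent vector `e` admissible if `e j < p (j + 1)` for every index `j` but the last.
Since `f^e := ∏ f_j ^ e_j` is monic of degree `∑ e_j d_{j+1}`, and mixed-radix expansion with
radices `p 1, …, p (k-1)` (the last digit unbounded) shows that this sum takes every value in `ℕ`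
exactly once on admissible `e`, the family of the `f^e` contains exactly one monic polynomial of
each degree and is therefore a basis of `K[y]`. Equivalently, `F ↦ F(f_1, …, f_k)` is a linear
bijection from the polynomials supported on admissible exponents onto `K[y]`.
-/

open Finset

def ofMixedDigits (r : ℕ → ℕ) {k : ℕ} (E : Fin k → ℕ) : ℕ :=
  ∑ j, E j * ∏ i ∈ range j, r i

theorem ofMixedDigits_cons (r : ℕ → ℕ) {k : ℕ} (a : ℕ) (E : Fin k → ℕ) :
    ofMixedDigits r (Fin.cons a E : Fin (k + 1) → ℕ) =
      a + r 0 * ofMixedDigits (fun i => r (i + 1)) E := by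
  simp only [ofMixedDigits, Fin.sum_univ_succ, Fin.cons_zero, Fin.cons_succ, Fin.val_zero,
    Fin.val_succ, prod_range_succ', prod_range_zero, mul_one, mul_sum]
  congr 1
  exact sum_congr rfl fun j _ => by ring

theorem ofMixedDigits_injective (r : ℕ → ℕ) {k : ℕ} {E E' : Fin (k + 1) → ℕ}
    (hE : ∀ j : Fin (k + 1), (j : ℕ) < k → E j < r j)
    (hE' : ∀ j : Fin (k + 1), (j : ℕ) < k → E' j < r j)
    (h : ofMixedDigits r E = ofMixedDigits r E') : E = E' := by
  induction k generalizing r with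
  | zero => simpa [ofMixedDigits, funext_iff, Fin.forall_fin_one] using h
  | succ k ih =>
    rw [← Fin.cons_self_tail E, ← Fin.cons_self_tail E'] at h ⊢
    rw [ofMixedDigits_cons, ofMixedDigits_cons] at h
    have h0 : E 0 < r 0 := hE 0 k.succ_pos
    have h0' : E' 0 < r 0 := hE' 0 k.succ_pos
    have hr : 0 < r 0 := by omega
    -- both sides are the division with remainder of the same number by `r 0`
    obtain ⟨htail, hhead⟩ := (Nat.div_mod_unique hr).2 ⟨h, h0⟩
    obtain ⟨htail', hhead'⟩ := (Nat.div_mod_unique hr).2 ⟨rfl, h0'⟩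
    rw [← hhead, hhead', ih _ (fun j hj => hE j.succ (by simpa using hj))
      (fun j hj => hE' j.succ (by simpa using hj)) (htail.symm.trans htail')]

theorem exists_ofMixedDigits_eq (r : ℕ → ℕ) {k : ℕ} (hr : ∀ j < k, 0 < r j) (n : ℕ) :
    ∃ E : Fin (k + 1) → ℕ, (∀ j : Fin (k + 1), (j : ℕ) < k → E j < r j) ∧
      ofMixedDigits r E = n := by
  induction k generalizing r n with
  | zero => exact ⟨fun _ => n, by simp, by simp [ofMixedDigits]⟩
  | succ k ih =>
    obtain ⟨E, hE, hEn⟩ := ih (fun i => r (i + 1)) (fun j hj => hr _ (by omega)) (n / r 0)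
    refine ⟨Fin.cons (n % r 0) E, fun j hj => ?_, ?_⟩
    · cases j using Fin.cases with
      | zero => simpa using Nat.mod_lt n (hr 0 k.succ_pos)
      | succ j => simpa using hE j (by simpa using hj)
    · rw [ofMixedDigits_cons, hEn, Nat.mod_add_div]

theorem bijective_ofMixedDigits {r : ℕ → ℕ} {k : ℕ} (hr : ∀ j < k, 0 < r j) :
    Function.Bijective
      fun e : {e : Fin (k + 1) →₀ ℕ // ∀ j : Fin (k + 1), (j : ℕ) < k → e j < r j} =>
        ofMixedDigits r ⇑e.1 := by
  refine ⟨fun e e' h => Subtype.ext (DFunLike.coe_injective (ofMixedDigits_injective r e.2 e'.2 h)),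
    fun n => ?_⟩
  obtain ⟨E, hE, rfl⟩ := exists_ofMixedDigits_eq r hr n
  exact ⟨⟨Finsupp.equivFunOnFinite.symm E, hE⟩, rfl⟩

namespace Polynomial

variable {R ι : Type*} [CommRing R] [IsDomain R]

noncomputable def basisOfMonicOfBijective (q : ι → R[X]) (hq : ∀ i, (q i).Monic)
    (hd : Function.Bijective (natDegree ∘ q)) : Module.Basis ι R R[X] :=
  let e := Equiv.ofBijective _ hd
  (Sequence.basis ⟨q ∘ e.symm, fun n => by
      rw [Function.comp_apply, degree_eq_natDegree (hq _).ne_zero]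
      exact congrArg _ (e.apply_symm_apply n)⟩
    fun n => by simp [(hq _).leadingCoeff]).reindex e.symm

@[simp]
theorem coe_basisOfMonicOfBijective (q : ι → R[X]) (hq : ∀ i, (q i).Monic)
    (hd : Function.Bijective (natDegree ∘ q)) : ⇑(basisOfMonicOfBijective q hq hd) = q := by
  ext1 i
  simpa [basisOfMonicOfBijective] using congrArg q ((Equiv.ofBijective _ hd).symm_apply_apply i)

end Polynomial

namespace MvPolynomial

open Polynomial

section CommSemiring

variable {R σ : Type*} [CommSemiring R]

theorem basisRestrictSupport_apply (S : Set (σ →₀ ℕ)) (e : S) :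
    (basisRestrictSupport R S e : MvPolynomial σ R) = monomial (e : σ →₀ ℕ) 1 := by
  classical
  rw [Module.Basis.apply_eq_iff (x := ⟨monomial (e : σ →₀ ℕ) 1, by simp⟩) |>.2]
  ext1 e'
  change coeff (e' : σ →₀ ℕ) (monomial (e : σ →₀ ℕ) (1 : R)) = _
  simp [coeff_monomial, Finsupp.single_apply, Subtype.ext_iff]

theorem mem_restrictSupport_iff_degreeOf_lt {P : σ → Prop} {d : σ → ℕ} (hd : ∀ i, P i → 0 < d i)
    {F : MvPolynomial σ R} :
    F ∈ restrictSupport R {e | ∀ i, P i → e i < d i} ↔ ∀ i, P i → degreeOf i F < d i := by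
  simp only [mem_restrictSupport_iff, Set.subset_def, Finset.mem_coe, Set.mem_ofPred_eq]
  exact ⟨fun h i hi => (degreeOf_lt_iff (hd i hi)).2 fun e he => h e he i hi,
    fun h e he i hi => (degreeOf_lt_iff (hd i hi)).1 (h i hi) e he⟩

theorem monic_aeval_monomial_one (f : σ → R[X]) (hf : ∀ i, (f i).Monic) (e : σ →₀ ℕ) :
    (aeval f (monomial e (1 : R))).Monic := by
  rw [aeval_monomial, map_one, one_mul]
  exact monic_prod_of_monic _ _ fun i _ => (hf i).pow _

theorem natDegree_aeval_monomial_one [Nontrivial R] (f : σ → R[X]) (hf : ∀ i, (f i).Monic)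
    (e : σ →₀ ℕ) :
    (aeval f (monomial e (1 : R))).natDegree = Finsupp.weight (fun i => (f i).natDegree) e := by
  rw [aeval_monomial, map_one, one_mul, Finsupp.prod,
    natDegree_prod_of_monic _ _ fun i _ => (hf i).pow _, Finsupp.weight_apply, Finsupp.sum]
  exact Finset.sum_congr rfl fun i _ => (hf i).natDegree_pow _

end CommSemiring

variable {R σ : Type*} [CommRing R] [IsDomain R]

theorem bijective_aeval_restrictSupport (f : σ → R[X]) (S : Set (σ →₀ ℕ))
    (hq : ∀ e ∈ S, (aeval f (monomial e (1 : R))).Monic)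
    (hd : Function.Bijective fun e : S => (aeval f (monomial (e : σ →₀ ℕ) (1 : R))).natDegree) :
    Function.Bijective ((aeval f).toLinearMap ∘ₗ (restrictSupport R S).subtype) := by
  let b := basisOfMonicOfBijective (fun e : S => aeval f (monomial (e : σ →₀ ℕ) (1 : R)))
    (fun e => hq e e.2) hd
  have : (aeval f).toLinearMap ∘ₗ (restrictSupport R S).subtype =
      (basisRestrictSupport R S).equiv b (Equiv.refl _) :=
    (basisRestrictSupport R S).ext fun e => by simp [b, basisRestrictSupport_apply]
  rw [this]
  exact LinearEquiv.bijective _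

end MvPolynomial

open MvPolynomial in
/-- Let `K` be a field, `k ≥ 1`, `p 0 = 1` and `p 1, …, p (k-1)` positive
integers; set `d j := p 0 · p 1 ⋯ p (j-1)`.  Let `f 1, …, f k ∈ K[y]` be monic of degrees
`d 1, …, d k` (here `f` is indexed by `Fin k`, with `f j` monic of degree
`d (j+1) = ∏_{i ≤ j} p i`).  Then for every polynomial `g ∈ K[y]` there is a unique
multivariate polynomial `F ∈ K[y₁,…,y_k]` with `F (f 1, …, f k) = g` whose degree in the
variable `y_j` is `< p j` for each `1 ≤ j ≤ k - 1`. -/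
theorem stmt6 (K : Type*) [Field K] (k : ℕ) (hk : 1 ≤ k)
    (p : ℕ → ℕ) (hp0 : p 0 = 1)
    (hp : ∀ j, 1 ≤ j → j ≤ k - 1 → 0 < p j)
    (f : Fin k → Polynomial K)
    (hf : ∀ j : Fin k, (f j).Monic ∧ (f j).natDegree = ∏ i ∈ Finset.range ((j : ℕ) + 1), p i)
    (g : Polynomial K) :
    ∃! F : MvPolynomial (Fin k) K,
      MvPolynomial.aeval f F = g ∧
      ∀ j : Fin k, (j : ℕ) + 1 < k → MvPolynomial.degreeOf j F < p ((j : ℕ) + 1) := by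
  obtain ⟨k, rfl⟩ := Nat.exists_eq_add_of_le' hk
  have hr : ∀ j < k, 0 < p (j + 1) := fun j hj => hp _ (by omega) (by omega)
  set S := {e : Fin (k + 1) →₀ ℕ | ∀ j : Fin (k + 1), (j : ℕ) < k → e j < p (j + 1)}
  have hS (F : MvPolynomial (Fin (k + 1)) K) : F ∈ restrictSupport K S ↔
      ∀ j : Fin (k + 1), (j : ℕ) + 1 < k + 1 → degreeOf j F < p (j + 1) := by
    rw [mem_restrictSupport_iff_degreeOf_lt (P := fun j : Fin (k + 1) => (j : ℕ) < k)
      fun j hj => hr j hj]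
    exact forall_congr' fun j => imp_congr_left Nat.add_lt_add_iff_right.symm
  have hdeg (e : Fin (k + 1) →₀ ℕ) :
      (aeval f (monomial e (1 : K))).natDegree = ofMixedDigits (fun i => p (i + 1)) ⇑e := by
    rw [natDegree_aeval_monomial_one f (fun j => (hf j).1), Finsupp.weight_eq_sum]
    refine Finset.sum_congr rfl fun j _ => ?_
    rw [(hf j).2, Finset.prod_range_succ', hp0, mul_one, smul_eq_mul]
  have hd := bijective_ofMixedDigits hr
  simp only [← hdeg] at hd
  have hL := bijective_aeval_restrictSupport f S
    (fun e _ => monic_aeval_monomial_one f (fun j => (hf j).1) e) hd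
  obtain ⟨⟨F, hFS⟩, hF⟩ := hL.2 g
  refine ⟨F, ⟨hF, (hS F).1 hFS⟩, fun F' hF' => ?_⟩
  exact congrArg Subtype.val (@hL.1 ⟨F', (hS F').2 hF'.2⟩ ⟨F, hFS⟩ (hF'.1.trans hF.symm))
end

section
/- Let p_k be a positive integer and let f ∈ K[y] be monic of degree d_k·p_k. Let F ∈ K[y_1,…,y_k] be the unique polynomial with F(f_1,…,f_k) = f and degree in y_j strictly less than p_j for each 1 ≤ j ≤ k−1. Then: (1) F, regarded as a polynomial in y_k, is monic of degree p_k; and (2) for every monomial y_1^{β_1}⋯y_k^{β_k} occurring with nonzero coefficient in F − y_k^{p_k} and every j with 1 ≤ j ≤ k, one has Σ_{i=1}^{j} d_i·β_i < d_{j+1}, where d_{k+1} := d_k·p_k. -/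
/-!
Give `y_i` the weight `d_i`. A monomial `y^β` evaluated at `(f_1, …, f_k)` is monic of degree
`∑ d_i β_i`, and for the monomials of `F` (where `β_i < p_i` for `i < k`) this number is written
in the mixed radix `(p_1, …, p_{k-1})` with digits `β_1, …, β_{k-1}` and unbounded leading
digit `β_k`. So distinct monomials of `F` have distinct weights, the one of largest weight alone
gives the leading term of `g`, and comparing with `g` forces it to be `y_k ^ p_k` with
coefficient `1`.
Every other monomial has weight `< d_k p_k`, which is (2) for `j = k` and implies (1);
for `j < k`, (2) holds for all monomials of `F` by the digit bounds.
-/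

open Finset Polynomial

theorem Nat.eq_and_eq_of_add_mul_eq {a b n x y : ℕ} (ha : a < n) (hb : b < n)
    (h : a + n * x = b + n * y) : a = b ∧ x = y := by
  have hn : 0 < n := by omega
  obtain ⟨hx, ha'⟩ := (Nat.div_mod_unique hn).2 ⟨rfl, ha⟩
  obtain ⟨hy, hb'⟩ := (Nat.div_mod_unique hn).2 ⟨rfl, hb⟩
  rw [h] at hx ha'
  exact ⟨ha'.symm.trans hb', hx.symm.trans hy⟩

theorem Finsupp.mul_le_weight {σ : Type*} (w : σ → ℕ) (m : σ →₀ ℕ) (i : σ) :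
    m i * w i ≤ Finsupp.weight w m := by
  by_cases hi : m i = 0
  · simp [hi]
  · exact Finset.single_le_sum (f := fun j => m j • w j) (fun _ _ => Nat.zero_le _)
      (Finsupp.mem_support_iff.2 hi)

namespace MvPolynomial

variable {R σ : Type*}

section CommSemiring

variable [CommSemiring R] {f : σ → R[X]} {w : σ → ℕ}

theorem monic_finsuppProd_pow (hf : ∀ i, (f i).Monic) (m : σ →₀ ℕ) :
    (m.prod fun i e => f i ^ e).Monic :=
  monic_prod_of_monic _ _ fun i _ => (hf i).pow _

theorem natDegree_finsuppProd_pow (hf : ∀ i, (f i).Monic) (hfw : ∀ i, (f i).natDegree = w i)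
    (m : σ →₀ ℕ) : (m.prod fun i e => f i ^ e).natDegree = Finsupp.weight w m := by
  rw [Finsupp.prod, natDegree_prod_of_monic _ _ fun i _ => (hf i).pow _, Finsupp.weight_apply]
  exact sum_congr rfl fun i _ => by rw [(hf i).natDegree_pow, hfw]; rfl

theorem aeval_eq_sum_C_mul_prod (F : MvPolynomial σ R) :
    aeval f F = ∑ m ∈ F.support, Polynomial.C (F.coeff m) * m.prod fun i e => f i ^ e := by
  conv_lhs => rw [F.as_sum]
  rw [map_sum]
  exact sum_congr rfl fun m _ => by rw [aeval_monomial, Polynomial.algebraMap_eq]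

variable {F : MvPolynomial σ R} {m₀ : σ →₀ ℕ}

theorem natDegree_aeval_le (hf : ∀ i, (f i).Monic) (hfw : ∀ i, (f i).natDegree = w i) {N : ℕ}
    (hN : ∀ m ∈ F.support, Finsupp.weight w m ≤ N) : (aeval f F).natDegree ≤ N := by
  rw [aeval_eq_sum_C_mul_prod]
  refine natDegree_sum_le_of_forall_le _ _ fun m hm => (natDegree_C_mul_le _ _).trans ?_
  rw [natDegree_finsuppProd_pow hf hfw]
  exact hN m hm

theorem coeff_aeval_weight (hf : ∀ i, (f i).Monic) (hfw : ∀ i, (f i).natDegree = w i)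
    (hm₀ : m₀ ∈ F.support)
    (hlt : ∀ m ∈ F.support, m ≠ m₀ → Finsupp.weight w m < Finsupp.weight w m₀) :
    (aeval f F).coeff (Finsupp.weight w m₀) = F.coeff m₀ := by
  rw [aeval_eq_sum_C_mul_prod, finsetSum_coeff, sum_eq_single_of_mem m₀ hm₀,
    Polynomial.coeff_C_mul, ← natDegree_finsuppProd_pow hf hfw,
    (monic_finsuppProd_pow hf m₀).coeff_natDegree, mul_one]
  intro m hm hne
  rw [Polynomial.coeff_C_mul, coeff_eq_zero_of_natDegree_lt, mul_zero]
  rw [natDegree_finsuppProd_pow hf hfw]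
  exact hlt m hm hne

theorem natDegree_aeval_eq_weight (hf : ∀ i, (f i).Monic) (hfw : ∀ i, (f i).natDegree = w i)
    (hm₀ : m₀ ∈ F.support)
    (hlt : ∀ m ∈ F.support, m ≠ m₀ → Finsupp.weight w m < Finsupp.weight w m₀) :
    (aeval f F).natDegree = Finsupp.weight w m₀ := by
  refine le_antisymm (natDegree_aeval_le hf hfw fun m hm => ?_) (le_natDegree_of_ne_zero ?_)
  · rcases eq_or_ne m m₀ with rfl | hne
    exacts [le_rfl, (hlt m hm hne).le]
  · rw [coeff_aeval_weight hf hfw hm₀ hlt]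
    exact mem_support_iff.1 hm₀

end CommSemiring

theorem exists_leading_monomial_of_monic_aeval [CommRing R] [Nontrivial R] {f : σ → R[X]}
    {w : σ → ℕ} {F : MvPolynomial σ R}
    (hf : ∀ i, (f i).Monic) (hfw : ∀ i, (f i).natDegree = w i)
    (hinj : Set.InjOn (Finsupp.weight w) (F.support : Set (σ →₀ ℕ)))
    (hF : (aeval f F).Monic) :
    ∃ m₀ ∈ F.support, Finsupp.weight w m₀ = (aeval f F).natDegree ∧
      ∀ m ∈ (F - monomial m₀ 1).support,
        m ∈ F.support ∧ Finsupp.weight w m < Finsupp.weight w m₀ := by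
  classical
  have hF0 : F ≠ 0 := by
    rintro rfl
    exact hF.ne_zero (map_zero _)
  obtain ⟨m₀, hm₀, hmax⟩ :=
    F.support.exists_max_image (Finsupp.weight w) (support_nonempty.2 hF0)
  have hlt : ∀ m ∈ F.support, m ≠ m₀ → Finsupp.weight w m < Finsupp.weight w m₀ :=
    fun m hm hne => (hmax m hm).lt_of_ne fun h => hne (hinj hm hm₀ h)
  have hdeg := natDegree_aeval_eq_weight hf hfw hm₀ hlt
  have hcoeff : F.coeff m₀ = 1 := by
    rw [← coeff_aeval_weight hf hfw hm₀ hlt, ← hdeg, ← leadingCoeff, hF.leadingCoeff]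
  refine ⟨m₀, hm₀, hdeg.symm, fun m hm => ?_⟩
  have hne : m ≠ m₀ := by
    rintro rfl
    simp [hcoeff] at hm
  have hmF : m ∈ F.support := by
    rwa [mem_support_iff, coeff_sub, coeff_monomial, if_neg hne.symm, sub_zero,
      ← mem_support_iff] at hm
  exact ⟨hmF, hlt m hmF hne⟩

end MvPolynomial

section MixedRadix

variable (p : ℕ → ℕ) (k : ℕ)

def mixedRadixDigits : Set (Fin k →₀ ℕ) :=
  {m | ∀ i : Fin k, (i : ℕ) + 1 < k → m i < p (i + 1)}

variable {k}

-- `m i` is the exponent of `y_{i+1}`, whose weight is `d_{i+1} = p 0 ⋯ p i`.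
def partialWeight (m : Fin k →₀ ℕ) (j : ℕ) : ℕ :=
  ∑ i ∈ univ.filter (fun i : Fin k => (i : ℕ) < j), (∏ t ∈ range (i + 1), p t) * m i

variable {p}

theorem partialWeight_succ (m : Fin k →₀ ℕ) {j : ℕ} (hj : j < k) :
    partialWeight p m (j + 1) =
      partialWeight p m j + (∏ t ∈ range (j + 1), p t) * m ⟨j, hj⟩ := by
  have : univ.filter (fun i : Fin k => (i : ℕ) < j + 1) =
      insert ⟨j, hj⟩ (univ.filter fun i : Fin k => (i : ℕ) < j) := by
    ext i
    simp only [mem_filter, mem_univ, true_and, mem_insert, Fin.ext_iff]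
    omega
  rw [partialWeight, this, sum_insert (by simp), add_comm]
  rfl

theorem partialWeight_of_le (m : Fin k →₀ ℕ) {j : ℕ} (hj : k ≤ j) :
    partialWeight p m j = Finsupp.weight (fun i : Fin k => ∏ t ∈ range (i + 1), p t) m := by
  rw [partialWeight, filter_true_of_mem fun i _ => by omega, Finsupp.weight_eq_sum]
  exact sum_congr rfl fun i _ => mul_comm _ _

theorem partialWeight_lt (hp0 : 0 < p 0) {m : Fin k →₀ ℕ} {j : ℕ} (hj : j ≤ k)
    (hm : ∀ i : Fin k, (i : ℕ) < j → m i < p (i + 1)) :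
    partialWeight p m j < ∏ t ∈ range (j + 1), p t := by
  induction j with
  | zero => simpa [partialWeight] using hp0
  | succ j ih =>
    have hjk : j < k := hj
    have hlow := ih hjk.le fun i hi => hm i (by omega)
    have hdigit : m ⟨j, hjk⟩ + 1 ≤ p (j + 1) := hm ⟨j, hjk⟩ (by simp)
    calc partialWeight p m (j + 1)
        = partialWeight p m j + (∏ t ∈ range (j + 1), p t) * m ⟨j, hjk⟩ :=
          partialWeight_succ m hjk
      _ < (∏ t ∈ range (j + 1), p t) * (m ⟨j, hjk⟩ + 1) := by rw [mul_add_one]; omega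
      _ ≤ ∏ t ∈ range (j + 1 + 1), p t := by
        rw [prod_range_succ _ (j + 1)]
        exact Nat.mul_le_mul_left _ hdigit

theorem eq_of_partialWeight_eq (hp0 : 0 < p 0) {m m' : Fin k →₀ ℕ} {j : ℕ} (hj : j ≤ k)
    (hm : ∀ i : Fin k, (i : ℕ) + 1 < j → m i < p (i + 1))
    (hm' : ∀ i : Fin k, (i : ℕ) + 1 < j → m' i < p (i + 1))
    (h : partialWeight p m j = partialWeight p m' j) :
    ∀ i : Fin k, (i : ℕ) < j → m i = m' i := by
  induction j with
  | zero => intro i hi; omega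
  | succ j ih =>
    have hjk : j < k := hj
    rw [partialWeight_succ m hjk, partialWeight_succ m' hjk] at h
    obtain ⟨hlow, hdigit⟩ := Nat.eq_and_eq_of_add_mul_eq
      (partialWeight_lt hp0 hjk.le fun i hi => hm i (by omega))
      (partialWeight_lt hp0 hjk.le fun i hi => hm' i (by omega)) h
    intro i hi
    rcases Nat.lt_succ_iff_lt_or_eq.1 hi with hi | hi
    · exact ih hjk.le (fun i hi => hm i (by omega)) (fun i hi => hm' i (by omega)) hlow i hi
    · obtain rfl : i = ⟨j, hjk⟩ := Fin.ext hi
      exact hdigit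

theorem weight_injOn_mixedRadixDigits (hp0 : 0 < p 0) :
    Set.InjOn (Finsupp.weight fun i : Fin k => ∏ t ∈ range (i + 1), p t)
      (mixedRadixDigits p k) := by
  intro m hm m' hm' h
  rw [← partialWeight_of_le m le_rfl, ← partialWeight_of_le m' le_rfl] at h
  exact Finsupp.ext fun i => eq_of_partialWeight_eq hp0 le_rfl hm hm' h i i.isLt

end MixedRadix

open MvPolynomial

/-- In the setting of Statement 6 (`K` a field, `k ≥ 1`, `p 0 = 1`,
`p 1, …, p (k-1)` positive, `d j = p 0 ⋯ p (j-1)`, `f j` monic of degree `d (j+1)`), let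
`p k` be a positive integer and let `g ∈ K[y]` be monic of degree `d k · p k`.  Let `F` be
the unique polynomial with `F (f 1, …, f k) = g` and degree in `y_j` less than `p j` for
`1 ≤ j ≤ k - 1`.  Then:
(1) `F`, regarded as a polynomial in `y_k`, is monic of degree `p k` (equivalently,
`F - y_k ^ p k` has degree `< p k` in `y_k`); and
(2) every monomial `y₁^{β₁} ⋯ y_k^{β_k}` occurring in `F - y_k ^ p k` satisfies
`∑_{i=1}^{j} d i · β i < d (j+1)` for every `1 ≤ j ≤ k`, where `d (k+1) := d k · p k`. -/
theorem stmt7 (K : Type*) [Field K] (k : ℕ) (hk : 1 ≤ k)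
    (p : ℕ → ℕ) (hp0 : p 0 = 1)
    (hpk : 0 < p k)
    (f : Fin k → Polynomial K)
    (hf : ∀ j : Fin k, (f j).Monic ∧ (f j).natDegree = ∏ i ∈ Finset.range ((j : ℕ) + 1), p i)
    (g : Polynomial K) (hg : g.Monic)
    (hgdeg : g.natDegree = (∏ i ∈ Finset.range k, p i) * p k)
    (F : MvPolynomial (Fin k) K)
    (hFeval : MvPolynomial.aeval f F = g)
    (hFdeg : ∀ j : Fin k, (j : ℕ) + 1 < k → MvPolynomial.degreeOf j F < p ((j : ℕ) + 1)) :
    MvPolynomial.degreeOf (⟨k - 1, by omega⟩ : Fin k)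
        (F - MvPolynomial.X (⟨k - 1, by omega⟩ : Fin k) ^ p k) < p k ∧
    ∀ m ∈ (F - MvPolynomial.X (⟨k - 1, by omega⟩ : Fin k) ^ p k).support,
      ∀ j, 1 ≤ j → j ≤ k →
        ∑ i ∈ Finset.univ.filter (fun i : Fin k => (i : ℕ) < j),
            (∏ t ∈ Finset.range ((i : ℕ) + 1), p t) * m i
          < ∏ t ∈ Finset.range (j + 1), p t := by
  set l : Fin k := ⟨k - 1, by omega⟩
  have hl : (l : ℕ) + 1 = k := Nat.sub_add_cancel hk
  have hp0' : 0 < p 0 := hp0 ▸ one_pos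
  have hdigits : (F.support : Set (Fin k →₀ ℕ)) ⊆ mixedRadixDigits p k :=
    fun m hm i hi => (monomial_le_degreeOf i hm).trans_lt (hFdeg i hi)
  obtain ⟨m₀, hm₀, hdeg, hlower⟩ := exists_leading_monomial_of_monic_aeval
    (fun i => (hf i).1) (fun i => (hf i).2)
    ((weight_injOn_mixedRadixDigits hp0').mono hdigits) (hFeval ▸ hg)
  rw [hFeval, hgdeg] at hdeg
  have hm₀_eq : m₀ = Finsupp.single l (p k) := by
    refine weight_injOn_mixedRadixDigits hp0' (hdigits hm₀) (fun i hi => ?_) ?_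
    · rw [Finsupp.single_eq_of_ne fun h => by rw [h] at hi; omega]
      exact (Nat.zero_le _).trans_lt (hFdeg i hi)
    · rw [hdeg, Finsupp.weight_single, smul_eq_mul, hl, mul_comm]
  rw [MvPolynomial.X_pow_eq_monomial, ← hm₀_eq]
  refine ⟨(degreeOf_lt_iff hpk).2 fun m hm => ?_, fun m hm j _ hjk => ?_⟩
  · have hmul := (Finsupp.mul_le_weight _ m l).trans_lt ((hlower m hm).2.trans_eq hdeg)
    rw [hl, mul_comm] at hmul
    exact Nat.lt_of_mul_lt_mul_left hmul
  · obtain ⟨hmF, hlt⟩ := hlower m hm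
    rcases hjk.lt_or_eq with hj | rfl
    · exact partialWeight_lt hp0' hjk fun i hi => hdigits hmF i (by omega)
    · rw [hdeg, ← partialWeight_of_le m le_rfl] at hlt
      rwa [prod_range_succ]
end

section
/- There exist nonzero complex numbers b_1,…,b_m such that the ℂ-algebra homomorphism χ : ℂ[x,y_1,…,y_m] → ℂ[t] determined by χ(x) = t^{ω_0} and χ(y_i) = b_i·t^{ω_i} for 1 ≤ i ≤ m has kernel exactly the ideal generated by H_2,…,H_{m+1}; consequently the quotient ring ℂ[x,y_1,…,y_m]/(H_2,…,H_{m+1}) is isomorphic as a ℂ-algebra to the subalgebra ℂ[t^{ω_0}, t^{ω_1}, …, t^{ω_m}] of ℂ[t] generated by the monomials t^{ω_0},…,t^{ω_m}. -/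
/-!
Choose the `b j` one after another so that `b j ^ p j = c j * ∏_{i<j} b i ^ β j i`; this is
possible over `ℂ`, and it makes `χ` kill every `H (j+1)`. Conversely, rewriting `y_j ^ p j` as
`c j * x ^ β j 0 ⋯ y_{j-1} ^ β j (j-1)` modulo `H (j+1)` lowers the exponent vector in the
colexicographic order, so every polynomial is congruent modulo the `H`'s to a combination of
standard monomials, those whose exponent of `y_j` is below `p j` for every `j ≥ 1`. Since `p j` is
minimal, distinct standard monomials have distinct weights `∑ a i * ω i`, and `χ` sends a monomial
of weight `n` to a nonzero multiple of `t ^ n`; hence `χ` is injective on their span and its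
kernel is generated by the `H`'s. The image of `χ` is `ℂ[t^{ω 0}, …, t^{ω m}]` because the `b i`
are units.
-/

open Finset MvPolynomial

namespace MonomialCurve

variable {σ : Type*}

def standardExponents (J : Set σ) (p : σ → ℕ) : Set (σ →₀ ℕ) := {a | ∀ j ∈ J, a j < p j}

noncomputable def binomialRelation {R : Type*} [CommRing R] (p : σ → ℕ) (B : σ → σ →₀ ℕ)
    (c : σ → R) (j : σ) : MvPolynomial σ R :=
  monomial (Finsupp.single j (p j)) 1 - monomial (B j) (c j)

section Evaluation

variable {K : Type*} [CommRing K]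

theorem aeval_C_mul_X_pow_monomial (u : σ → K) (w : σ → ℕ) (a : σ →₀ ℕ) (r : K) :
    aeval (fun i => Polynomial.C (u i) * Polynomial.X ^ w i) (monomial a r) =
      Polynomial.monomial (Finsupp.weight w a) (r * a.prod fun i k => u i ^ k) := by
  simp only [aeval_monomial, Finsupp.prod, mul_pow, ← Polynomial.C_pow, ← pow_mul,
    Finset.prod_mul_distrib, ← map_prod, Finset.prod_pow_eq_pow_sum]
  rw [Polynomial.algebraMap_eq, ← mul_assoc, ← Polynomial.C_mul,
    Polynomial.C_mul_X_pow_eq_monomial, Finsupp.weight_apply, Finsupp.sum]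
  simp only [smul_eq_mul, mul_comm (w _)]

theorem eq_zero_of_aeval_C_mul_X_pow_eq_zero (u : σ → Kˣ) {w : σ → ℕ} {s : Set (σ →₀ ℕ)}
    (hs : Set.InjOn (Finsupp.weight w) s) {g : MvPolynomial σ K}
    (hg : g ∈ restrictSupport K s)
    (h : aeval (fun i => Polynomial.C (u i : K) * Polynomial.X ^ w i) g = 0) : g = 0 := by
  by_contra hne
  obtain ⟨a, ha⟩ := support_nonempty.mpr hne
  have hcoeff := congrArg (Polynomial.coeff · (Finsupp.weight w a)) h
  simp only [Polynomial.coeff_zero] at hcoeff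
  conv_lhs at hcoeff => rw [g.as_sum, map_sum]
  simp only [aeval_C_mul_X_pow_monomial, Polynomial.finsetSum_coeff, Polynomial.coeff_monomial]
    at hcoeff
  rw [Finset.sum_eq_single_of_mem a ha
    (fun b hb hba => if_neg fun hw => hba (hs (hg hb) (hg ha) hw)), if_pos rfl] at hcoeff
  have hunit : IsUnit (a.prod fun i k => (u i : K) ^ k) :=
    IsUnit.prod_iff.mpr fun i _ => (u i).isUnit.pow _
  exact mem_support_iff.mp ha (hunit.mul_left_eq_zero.mp hcoeff)

theorem range_aeval_C_mul_X_pow (u : σ → Kˣ) (w : σ → ℕ) :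
    (aeval fun i => Polynomial.C (u i : K) * Polynomial.X ^ w i).range =
      Algebra.adjoin K (Set.range fun i => Polynomial.X ^ w i) := by
  rw [← Algebra.adjoin_range_eq_range_aeval]
  apply le_antisymm <;> refine Algebra.adjoin_le ?_ <;> rintro _ ⟨i, rfl⟩
  · simp only [SetLike.mem_coe, ← Polynomial.smul_eq_C_mul]
    exact Subalgebra.smul_mem _ (Algebra.subset_adjoin (Set.mem_range_self i)) _
  · have : Polynomial.X ^ w i = (↑(u i)⁻¹ : K) • (Polynomial.C (u i : K) * Polynomial.X ^ w i) := by
      rw [Polynomial.smul_eq_C_mul, ← mul_assoc, ← Polynomial.C_mul, Units.inv_mul,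
        Polynomial.C_1, one_mul]
    simp only [SetLike.mem_coe]
    rw [this]
    exact Subalgebra.smul_mem _ (Algebra.subset_adjoin (Set.mem_range_self i)) _

theorem nonempty_quotient_algEquiv_adjoin (u : σ → Kˣ) (w : σ → ℕ) {I : Ideal (MvPolynomial σ K)}
    (hI : RingHom.ker (aeval fun i => Polynomial.C (u i : K) * Polynomial.X ^ w i) = I) :
    Nonempty ((MvPolynomial σ K ⧸ I) ≃ₐ[K]
      Algebra.adjoin K (Set.range fun i => (Polynomial.X : Polynomial K) ^ w i)) :=
  ⟨(Ideal.quotientEquivAlgOfEq K hI.symm).trans ((Ideal.quotientKerEquivRange _).trans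
    (Subalgebra.equivOfEq _ _ (range_aeval_C_mul_X_pow u w)))⟩

end Evaluation

variable [LinearOrder σ]

theorem injOn_weight_standardExponents [Fintype σ] [LocallyFiniteOrderBot σ]
    {J : Set σ} {p w : σ → ℕ}
    (hw : ∀ j (d : ℤ) (f : σ → ℤ), (j ∈ J → d.natAbs < p j) →
      d * w j = ∑ i ∈ Iio j, f i * w i → d = 0) :
    Set.InjOn (Finsupp.weight w) (standardExponents J p) := by
  intro a ha a' ha' hweight
  by_contra hne
  have hlocus : (a.neLocus a').Nonempty := by
    rwa [Finset.nonempty_iff_ne_empty, ne_eq, Finsupp.neLocus_eq_empty]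
  set j := (a.neLocus a').max' hlocus
  have hj : a j ≠ a' j := Finsupp.mem_neLocus.mp ((a.neLocus a').max'_mem hlocus)
  have habove : ∀ i, j < i → a i = a' i := fun i hi => by
    by_contra h
    exact (Finset.le_max' _ i (Finsupp.mem_neLocus.mpr h)).not_gt hi
  have hsum : ∑ i ∈ Iio j, ((a i : ℤ) - a' i) * w i + ((a j : ℤ) - a' j) * w j = 0 := by
    have htot : ∑ i, ((a i : ℤ) - a' i) * w i = 0 := by
      have := congrArg (fun n : ℕ => (n : ℤ)) hweight
      simp only [Finsupp.weight_eq_sum, smul_eq_mul, Nat.cast_sum, Nat.cast_mul] at this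
      simp only [sub_mul, Finset.sum_sub_distrib, this, sub_self]
    rw [← htot, ← Finset.sum_subset (Finset.subset_univ (Iic j)), Finset.Iic_eq_cons_Iio,
      Finset.sum_cons, add_comm]
    intro i _ hi
    simp [habove i (not_le.mp (by simpa using hi))]
  refine hj (Int.ofNat_inj.mp (sub_eq_zero.mp (hw j _ (fun i => (a' i : ℤ) - a i) ?_ ?_)))
  · intro hjJ
    have := ha j hjJ
    have := ha' j hjJ
    omega
  · rw [← neg_eq_of_add_eq_zero_right hsum, ← Finset.sum_neg_distrib]
    exact Finset.sum_congr rfl fun i _ => by ring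

section Reduction

variable {R : Type*} [CommRing R] {J : Set σ} {p : σ → ℕ} {B : σ → σ →₀ ℕ} {c : σ → R}

theorem monomial_mem_restrictSupport_sup [Finite σ] (hp : ∀ j ∈ J, 0 < p j)
    (hB : ∀ j ∈ J, ∀ i, j ≤ i → B j i = 0) {I : Ideal (MvPolynomial σ R)}
    (hI : ∀ j ∈ J, binomialRelation p B c j ∈ I) (a : σ →₀ ℕ) :
    monomial a 1 ∈ restrictSupport R (standardExponents J p) ⊔ I.restrictScalars R := by
  induction a using (InvImage.wf (fun a : σ →₀ ℕ => toColex ⇑a) wellFounded_lt).induction with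
  | _ a ih =>
  by_cases ha : a ∈ standardExponents J p
  · exact Submodule.mem_sup_left ((monomial_mem_restrictSupport R).mpr (Or.inl ha))
  obtain ⟨j, hjJ, hja⟩ : ∃ j ∈ J, p j ≤ a j := by simpa [standardExponents] using ha
  set a₀ := a - Finsupp.single j (p j)
  have ha₀ : a₀ + Finsupp.single j (p j) = a :=
    tsub_add_cancel_of_le (Finsupp.single_le_iff.mpr hja)
  have hreduce : monomial a (1 : R) =
      monomial a₀ 1 * binomialRelation p B c j + c j • monomial (a₀ + B j) 1 := by
    rw [binomialRelation, mul_sub, monomial_mul, monomial_mul, ha₀, smul_monomial]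
    simp
  have hlt : toColex (⇑(a₀ + B j)) < toColex (⇑a) := by
    refine ⟨j, fun i hi => ?_, ?_⟩
    · rw [← ha₀]
      simp [hB j hjJ i hi.le, Finsupp.single_eq_of_ne hi.ne']
    · have := hp j hjJ
      simp only [a₀, Pi.toColex_apply, Finsupp.coe_add, Finsupp.coe_tsub, Pi.add_apply,
        Pi.sub_apply, Finsupp.single_eq_same, hB j hjJ j le_rfl]
      omega
  rw [hreduce]
  exact Submodule.add_mem _
    (Submodule.mem_sup_right (Ideal.mul_mem_left _ _ (hI j hjJ)))
    (Submodule.smul_mem _ _ (ih _ hlt))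

theorem restrictSupport_sup_eq_top [Finite σ] (hp : ∀ j ∈ J, 0 < p j)
    (hB : ∀ j ∈ J, ∀ i, j ≤ i → B j i = 0) {I : Ideal (MvPolynomial σ R)}
    (hI : ∀ j ∈ J, binomialRelation p B c j ∈ I) :
    restrictSupport R (standardExponents J p) ⊔ I.restrictScalars R = ⊤ := by
  refine eq_top_iff.mpr fun f _ => f.induction_on' (fun a r => ?_) fun _ _ => Submodule.add_mem _
  rw [← mul_one r, ← smul_eq_mul, ← smul_monomial]
  exact Submodule.smul_mem _ _ (monomial_mem_restrictSupport_sup hp hB hI a)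

theorem ker_aeval_C_mul_X_pow [Fintype σ] (u : σ → Rˣ) {w : σ → ℕ}
    (hw : Set.InjOn (Finsupp.weight w) (standardExponents J p)) (hp : ∀ j ∈ J, 0 < p j)
    (hB : ∀ j ∈ J, ∀ i, j ≤ i → B j i = 0)
    (hχ : ∀ j ∈ J, aeval (fun i => Polynomial.C (u i : R) * Polynomial.X ^ w i)
      (binomialRelation p B c j) = 0) :
    RingHom.ker (aeval fun i => Polynomial.C (u i : R) * Polynomial.X ^ w i) =
      Ideal.span (binomialRelation p B c '' J) := by
  have hspan : Ideal.span (binomialRelation p B c '' J) ≤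
      RingHom.ker (aeval fun i => Polynomial.C (u i : R) * Polynomial.X ^ w i) :=
    Ideal.span_le.mpr (Set.image_subset_iff.mpr hχ)
  refine le_antisymm (fun f hf => ?_) hspan
  obtain ⟨g, hg, h, hh, rfl⟩ := Submodule.mem_sup.mp
    ((restrictSupport_sup_eq_top hp hB fun j hj => Ideal.subset_span (Set.mem_image_of_mem _ hj)).ge
      (Submodule.mem_top (x := f)))
  have hχg : aeval (fun i => Polynomial.C (u i : R) * Polynomial.X ^ w i) g = 0 := by
    simpa [RingHom.mem_ker.mp (hspan hh)] using RingHom.mem_ker.mp hf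
  rw [eq_zero_of_aeval_C_mul_X_pow_eq_zero u hw hg hχg, zero_add]
  exact hh

end Reduction

theorem exists_units_pow_eq_mul_prod {K : Type*} [Field K] [IsAlgClosed K] (c : ℕ → Kˣ)
    (β : ℕ → ℕ → ℕ) {p : ℕ → ℕ} (n : ℕ) (hp : ∀ j, 1 ≤ j → j ≤ n → 0 < p j) :
    ∃ b : ℕ → Kˣ, b 0 = 1 ∧
      ∀ j, 1 ≤ j → j ≤ n → b j ^ p j = c j * ∏ i ∈ range j, b i ^ β j i := by
  induction n with
  | zero => exact ⟨1, rfl, fun j h1 h0 => by omega⟩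
  | succ n ih =>
    obtain ⟨b, hb0, hb⟩ := ih fun j h1 hj => hp j h1 (by omega)
    set v := c (n + 1) * ∏ i ∈ range (n + 1), b i ^ β (n + 1) i
    have hpn := hp (n + 1) (by omega) le_rfl
    obtain ⟨z, hz⟩ := IsAlgClosed.exists_pow_nat_eq (v : K) hpn
    have hz0 : z ≠ 0 := by
      rintro rfl
      exact v.ne_zero (by rw [← hz, zero_pow hpn.ne'])
    refine ⟨Function.update b (n + 1) (Units.mk0 z hz0), by simp [hb0], fun j h1 hj => ?_⟩
    have hprod : ∏ i ∈ range j, Function.update b (n + 1) (Units.mk0 z hz0) i ^ β j i =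
        ∏ i ∈ range j, b i ^ β j i :=
      prod_congr rfl fun i hi => by rw [Function.update_of_ne (by simp at hi; omega)]
    rw [hprod]
    rcases (show j ≤ n ∨ j = n + 1 by omega) with hj | rfl
    · rw [Function.update_of_ne (by omega)]
      exact hb j h1 hj
    · rw [Function.update_self]
      ext
      simp [hz, v]

section Coordinates

variable {m : ℕ}

noncomputable def tailExponent (m : ℕ) (β : ℕ → ℕ → ℕ) (j : ℕ) : Fin (m + 1) →₀ ℕ :=
  ∑ n ∈ range j, Finsupp.single (Fin.ofNat (m + 1) n) (β j n)

theorem sum_Iio_eq_sum_range {M : Type*} [AddCommMonoid M] {n : ℕ} (j : Fin n) (g : ℕ → M) :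
    ∑ i ∈ Iio j, g i = ∑ n ∈ range j, g n := by
  rw [← Nat.Iio_eq_range, ← Fin.map_valEmbedding_Iio, sum_map]
  rfl

theorem val_ofNat_of_lt {n : ℕ} (hn : n < m + 1) : (Fin.ofNat (m + 1) n : ℕ) = n :=
  Nat.mod_eq_of_lt hn

theorem tailExponent_apply_of_le {β : ℕ → ℕ → ℕ} {j : ℕ} (hj : j ≤ m + 1) {i : Fin (m + 1)}
    (hi : j ≤ i) : tailExponent m β j i = 0 := by
  rw [tailExponent, Finsupp.finsetSum_apply]
  refine sum_eq_zero fun n hn => Finsupp.single_eq_of_ne fun h => ?_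
  have := val_ofNat_of_lt ((mem_range.mp hn).trans_le hj)
  have := mem_range.mp hn
  omega

theorem weight_tailExponent (ω : ℕ → ℕ) (β : ℕ → ℕ → ℕ) {j : ℕ} (hj : j ≤ m + 1) :
    Finsupp.weight (fun i : Fin (m + 1) => ω i) (tailExponent m β j) =
      ∑ n ∈ range j, β j n * ω n := by
  rw [tailExponent, map_sum]
  exact sum_congr rfl fun n hn => by
    rw [Finsupp.weight_single, smul_eq_mul, val_ofNat_of_lt ((mem_range.mp hn).trans_le hj)]

theorem prod_tailExponent {M : Type*} [CommMonoid M] (b : ℕ → M) (β : ℕ → ℕ → ℕ) {j : ℕ}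
    (hj : j ≤ m + 1) :
    (tailExponent m β j).prod (fun i k => b i ^ k) = ∏ n ∈ range j, b n ^ β j n := by
  rw [tailExponent, ← Finsupp.prod_finsetSum_index (fun _ => pow_zero _) fun _ _ _ => pow_add _ _ _]
  exact prod_congr rfl fun n hn => by
    simp only [Finsupp.prod_single_index, pow_zero, val_ofNat_of_lt ((mem_range.mp hn).trans_le hj)]

theorem eq_zero_of_mul_eq_sum_Iio {ω p : ℕ → ℕ} (hω : 0 < ω 0)
    (hp : ∀ j, 1 ≤ j → j ≤ m →
      IsLeast {α : ℕ | 0 < α ∧ ∃ cf : ℕ → ℤ,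
        (α : ℤ) * (ω j : ℤ) = ∑ i ∈ Finset.range j, cf i * (ω i : ℤ)} (p j))
    (j : Fin (m + 1)) (d : ℤ) (f : Fin (m + 1) → ℤ) (hd : j ≠ 0 → d.natAbs < p j)
    (h : d * ω j = ∑ i ∈ Iio j, f i * ω i) : d = 0 := by
  rcases eq_or_ne j 0 with rfl | hj
  · simpa [bot_eq_zero, hω.ne'] using h
  by_contra hd0
  refine (hd hj).not_ge ((hp j (Fin.pos_of_ne_zero hj)
    j.is_le).2 ⟨Int.natAbs_pos.mpr hd0, fun n => d.sign * f (Fin.ofNat (m + 1) n), ?_⟩)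
  simp_rw [← Int.sign_mul_self_eq_natAbs, mul_assoc, h, mul_sum,
    ← sum_Iio_eq_sum_range j fun n => d.sign * (f (Fin.ofNat (m + 1) n) * ω n),
    Fin.ofNat_val_eq_self]

theorem X_pow_sub_C_mul_prod_eq {R : Type*} [CommRing R] (β : ℕ → ℕ → ℕ) (j q : ℕ) (r : R) :
    X (Fin.ofNat (m + 1) j) ^ q - C r * ∏ n ∈ range j, X (Fin.ofNat (m + 1) n) ^ β j n =
      monomial (Finsupp.single (Fin.ofNat (m + 1) j) q) 1 - monomial (tailExponent m β j) r := by
  simp only [tailExponent, X_pow_eq_monomial, ← monomial_sum_one, C_mul_monomial, mul_one]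

theorem setOf_eq_image_binomialRelation {R : Type*} [CommRing R] {p : ℕ → ℕ} {c : ℕ → R}
    {β : ℕ → ℕ → ℕ} {H : ℕ → MvPolynomial (Fin (m + 1)) R}
    (hH : ∀ j, 1 ≤ j → j ≤ m →
      H (j + 1) = X (Fin.ofNat (m + 1) j) ^ p j
        - C (c j) * ∏ i ∈ range j, X (Fin.ofNat (m + 1) i) ^ β j i) :
    {h | ∃ j, 1 ≤ j ∧ j ≤ m ∧ h = H (j + 1)} =
      binomialRelation (fun j : Fin (m + 1) => p j) (fun j => tailExponent m β j) (fun j => c j) ''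
        {j | j ≠ 0} := by
  ext h
  constructor
  · rintro ⟨j, hj1, hjm, rfl⟩
    have hj : (Fin.ofNat (m + 1) j : ℕ) = j := val_ofNat_of_lt (Nat.lt_succ_of_le hjm)
    refine ⟨Fin.ofNat (m + 1) j, fun h0 => by simp only [h0, Fin.val_zero] at hj; omega, ?_⟩
    rw [hH j hj1 hjm, X_pow_sub_C_mul_prod_eq, binomialRelation, hj]
  · rintro ⟨j, hj, rfl⟩
    refine ⟨j, Fin.pos_of_ne_zero hj, j.is_le, ?_⟩
    rw [hH j (Fin.pos_of_ne_zero hj) j.is_le,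
      X_pow_sub_C_mul_prod_eq, binomialRelation, Fin.ofNat_val_eq_self]

theorem aeval_binomialRelation_eq_zero {K : Type*} [CommRing K] {ω p : ℕ → ℕ}
    {β : ℕ → ℕ → ℕ} {b c : ℕ → Kˣ} (j : Fin (m + 1))
    (hrel : p j * ω j = ∑ n ∈ range j, β j n * ω n)
    (hb : b j ^ p j = c j * ∏ n ∈ range j, b n ^ β j n) :
    aeval (fun i : Fin (m + 1) => Polynomial.C (b i : K) * Polynomial.X ^ ω i)
      (binomialRelation (fun i : Fin (m + 1) => p i) (fun i => tailExponent m β i)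
        (fun i => (c i : K)) j) = 0 := by
  rw [binomialRelation, map_sub, aeval_C_mul_X_pow_monomial, aeval_C_mul_X_pow_monomial,
    Finsupp.weight_single, weight_tailExponent ω β j.is_lt.le,
    prod_tailExponent (fun n => (b n : K)) β j.is_lt.le, sub_eq_zero]
  simp only [Finsupp.prod_single_index, pow_zero, smul_eq_mul, hrel, one_mul]
  exact_mod_cast congrArg (Polynomial.monomial _ ∘ Units.val) hb

theorem ker_aeval_eq_span_binomialRelation {K : Type*} [CommRing K] {ω p : ℕ → ℕ}
    {β : ℕ → ℕ → ℕ} (hω : 0 < ω 0)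
    (hp : ∀ j, 1 ≤ j → j ≤ m →
      IsLeast {α : ℕ | 0 < α ∧ ∃ cf : ℕ → ℤ,
        (α : ℤ) * (ω j : ℤ) = ∑ i ∈ Finset.range j, cf i * (ω i : ℤ)} (p j))
    (hrel : ∀ j, 1 ≤ j → j ≤ m → p j * ω j = ∑ i ∈ Finset.range j, β j i * ω i)
    {b c : ℕ → Kˣ} (hb : ∀ j, 1 ≤ j → j ≤ m → b j ^ p j = c j * ∏ i ∈ range j, b i ^ β j i) :
    RingHom.ker (aeval fun i : Fin (m + 1) => Polynomial.C (b i : K) * Polynomial.X ^ ω i) =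
      Ideal.span (binomialRelation (fun j : Fin (m + 1) => p j) (fun j => tailExponent m β j)
        (fun j => (c j : K)) '' {j | j ≠ 0}) := by
  exact ker_aeval_C_mul_X_pow (fun i : Fin (m + 1) => b i)
    (injOn_weight_standardExponents (eq_zero_of_mul_eq_sum_Iio hω hp))
    (fun j hj => (hp j (Fin.pos_of_ne_zero hj) j.is_le).1.1)
    (fun j _ i hi => tailExponent_apply_of_le j.is_lt.le hi)
    (fun j hj => aeval_binomialRelation_eq_zero j (hrel j (Fin.pos_of_ne_zero hj) j.is_le)
      (hb j (Fin.pos_of_ne_zero hj) j.is_le))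

end Coordinates

end MonomialCurve

open MonomialCurve in
theorem stmt8_general (m : ℕ)
    (ω : ℕ → ℕ) (hω : ∀ i, i ≤ m → 0 < ω i)
    (p : ℕ → ℕ)
    (hp : ∀ j, 1 ≤ j → j ≤ m →
      IsLeast {α : ℕ | 0 < α ∧ ∃ cf : ℕ → ℤ,
        (α : ℤ) * (ω j : ℤ) = ∑ i ∈ Finset.range j, cf i * (ω i : ℤ)} (p j))
    (c : ℕ → ℂˣ) (β : ℕ → ℕ → ℕ)
    (hrel : ∀ j, 1 ≤ j → j ≤ m → p j * ω j = ∑ i ∈ Finset.range j, β j i * ω i)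
    (H : ℕ → MvPolynomial (Fin (m + 1)) ℂ)
    (hH : ∀ j, 1 ≤ j → j ≤ m →
      H (j + 1) = MvPolynomial.X (Fin.ofNat (m + 1) j) ^ p j
        - MvPolynomial.C ((c j : ℂ)) *
            ∏ i ∈ Finset.range j, MvPolynomial.X (Fin.ofNat (m + 1) i) ^ β j i) :
    ∃ b : ℕ → ℂˣ,
      RingHom.ker (MvPolynomial.aeval
          (fun i : Fin (m + 1) =>
            if (i : ℕ) = 0 then (Polynomial.X : Polynomial ℂ) ^ ω 0
            else Polynomial.C ((b (i : ℕ) : ℂ)) * Polynomial.X ^ ω (i : ℕ)) :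
          MvPolynomial (Fin (m + 1)) ℂ →ₐ[ℂ] Polynomial ℂ)
        = Ideal.span {h : MvPolynomial (Fin (m + 1)) ℂ | ∃ j, 1 ≤ j ∧ j ≤ m ∧ h = H (j + 1)} ∧
      Nonempty ((MvPolynomial (Fin (m + 1)) ℂ ⧸
          Ideal.span {h : MvPolynomial (Fin (m + 1)) ℂ | ∃ j, 1 ≤ j ∧ j ≤ m ∧ h = H (j + 1)})
        ≃ₐ[ℂ] Algebra.adjoin ℂ {f : Polynomial ℂ | ∃ i, i ≤ m ∧ f = Polynomial.X ^ ω i}) := by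
  obtain ⟨b, hb0, hb⟩ := exists_units_pow_eq_mul_prod c β m fun j h1 h2 => (hp j h1 h2).1.1
  have hχ : (fun i : Fin (m + 1) => if (i : ℕ) = 0 then (Polynomial.X : Polynomial ℂ) ^ ω 0
      else Polynomial.C ((b (i : ℕ) : ℂ)) * Polynomial.X ^ ω (i : ℕ)) =
      fun i : Fin (m + 1) => Polynomial.C (b i : ℂ) * Polynomial.X ^ ω i := by
    funext i
    split_ifs with hi
    · simp [hi, hb0]
    · rfl
  have hgens : {f : Polynomial ℂ | ∃ i, i ≤ m ∧ f = Polynomial.X ^ ω i} =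
      Set.range fun i : Fin (m + 1) => Polynomial.X ^ ω i := by
    ext f
    exact ⟨fun ⟨i, hi, hf⟩ => ⟨⟨i, Nat.lt_succ_of_le hi⟩, hf.symm⟩,
      fun ⟨i, hi⟩ => ⟨i, i.is_le, hi.symm⟩⟩
  have hker := ker_aeval_eq_span_binomialRelation (hω 0 m.zero_le) hp hrel hb
  refine ⟨b, ?_⟩
  rw [hχ, hgens, setOf_eq_image_binomialRelation hH]
  exact ⟨hker, nonempty_quotient_algEquiv_adjoin _ _ hker⟩

/-- Let `m ≥ 1`, let `ω 0, …, ω m` be positive integers and `p 1, …, p m`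
positive integers such that `p j` is the least positive integer `α` with
`α · ω j ∈ ℤ ω 0 + ⋯ + ℤ ω (j-1)`.  For `1 ≤ j ≤ m` let `c j ∈ ℂˣ` and nonnegative integers
`β j 0, …, β j (j-1)` with `β j i < p i` for `1 ≤ i ≤ j - 1` and
`p j · ω j = ∑_{i=0}^{j-1} β j i · ω i`, and set
`H (j+1) = y_j ^ p j − c j · x ^ β j 0 · y₁ ^ β j 1 ⋯ y_{j-1} ^ β j (j-1)` in
`ℂ[x, y₁, …, y_m]` (modeled as `MvPolynomial (Fin (m+1)) ℂ`, variable `0` being `x` and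
variable `i` being `y_i` for `1 ≤ i ≤ m`).  Then there are nonzero `b 1, …, b m ∈ ℂ` such
that the `ℂ`-algebra map `χ : ℂ[x,y₁,…,y_m] → ℂ[t]` with `χ(x) = t ^ ω 0` and
`χ(y_i) = b i · t ^ ω i` has kernel exactly the ideal `(H 2, …, H (m+1))`; consequently
`ℂ[x,y₁,…,y_m]/(H 2, …, H (m+1))` is `ℂ`-algebra isomorphic to the subalgebra
`ℂ[t^{ω 0}, …, t^{ω m}]` of `ℂ[t]`. -/
theorem stmt8 (m : ℕ) (hm : 1 ≤ m)
    (ω : ℕ → ℕ) (hω : ∀ i, i ≤ m → 0 < ω i)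
    (p : ℕ → ℕ)
    (hp : ∀ j, 1 ≤ j → j ≤ m →
      IsLeast {α : ℕ | 0 < α ∧ ∃ cf : ℕ → ℤ,
        (α : ℤ) * (ω j : ℤ) = ∑ i ∈ Finset.range j, cf i * (ω i : ℤ)} (p j))
    (c : ℕ → ℂˣ) (β : ℕ → ℕ → ℕ)
    (hβ : ∀ j, 1 ≤ j → j ≤ m → ∀ i, 1 ≤ i → i ≤ j - 1 → β j i < p i)
    (hrel : ∀ j, 1 ≤ j → j ≤ m → p j * ω j = ∑ i ∈ Finset.range j, β j i * ω i)
    (H : ℕ → MvPolynomial (Fin (m + 1)) ℂ)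
    (hH : ∀ j, 1 ≤ j → j ≤ m →
      H (j + 1) = MvPolynomial.X (Fin.ofNat (m + 1) j) ^ p j
        - MvPolynomial.C ((c j : ℂ)) *
            ∏ i ∈ Finset.range j, MvPolynomial.X (Fin.ofNat (m + 1) i) ^ β j i) :
    ∃ b : ℕ → ℂˣ,
      RingHom.ker (MvPolynomial.aeval
          (fun i : Fin (m + 1) =>
            if (i : ℕ) = 0 then (Polynomial.X : Polynomial ℂ) ^ ω 0
            else Polynomial.C ((b (i : ℕ) : ℂ)) * Polynomial.X ^ ω (i : ℕ)) :
          MvPolynomial (Fin (m + 1)) ℂ →ₐ[ℂ] Polynomial ℂ)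
        = Ideal.span {h : MvPolynomial (Fin (m + 1)) ℂ | ∃ j, 1 ≤ j ∧ j ≤ m ∧ h = H (j + 1)} ∧
      Nonempty ((MvPolynomial (Fin (m + 1)) ℂ ⧸
          Ideal.span {h : MvPolynomial (Fin (m + 1)) ℂ | ∃ j, 1 ≤ j ∧ j ≤ m ∧ h = H (j + 1)})
        ≃ₐ[ℂ] Algebra.adjoin ℂ {f : Polynomial ℂ | ∃ i, i ≤ m ∧ f = Polynomial.X ^ ω i}) :=
  stmt8_general m ω hω p hp c β hrel H hH
end

section
/- The relation ≺ is a monomial well-order on the monomials of ℂ[x,y_1,…,y_m] compatible with multiplication, and the set {H_2,…,H_m} is a Gröbner basis with respect to ≺ of the ideal it generates: for every nonzero F in the ideal of ℂ[x,y_1,…,y_m] generated by H_2,…,H_m, the ≺-greatest monomial occurring in F is divisible by y_j^{p_j} for some j with 1 ≤ j ≤ m−1. -/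
/-!
The order `prec9 m ω` is the pullback of the lexicographic order of `ℕ ×ₗ Lex ((Fin (m + 1))ᵒᵈ → ℕ)`
along the injective additive map `γ ↦ (weight of γ, γ)`, so it is a well-founded strict total order
compatible with addition.

For the Gröbner property, let `L ⊆ ℤ^{m+1}` be the lattice spanned by the exponent differences
`v_j = p_j e_j - (β_{j,0}, …, β_{j,j-1}, 0, …)` of the binomials `H_{j+1}`. Choose `a_i ≠ 0` with
`a_j ^ p_j = c_j ∏_{i<j} a_i ^ β_{j,i}`; then `X_i ↦ a_i · [e_i]` is an algebra map into the group
algebra `ℂ[ℤ^{m+1}/L]` which kills every `H_{j+1}`, hence the whole ideal. Every `v_j` has weight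
zero and its last nonzero entry is `p_j`, in position `j`; so if `γ - μ ∈ L` is nonzero, then `γ` and `μ`
have the same weight and the last nonzero entry of `γ - μ` is a nonzero multiple of some `p_j`.
Consequently, if the leading exponent `μ` of `F` had `μ_j < p_j` for all `j`, no other exponent of
`F` would lie in the class of `μ`, and the coefficient of `[μ]` in the image of `F` would be
`F_μ a^μ ≠ 0`.
-/

/-- The monomial order `≺` on exponent vectors `γ : Fin (m+1) →₀ ℕ` of monomials
`x^{γ 0} y₁^{γ 1} ⋯ y_m^{γ m}` of `ℂ[x,y₁,…,y_m]`: `γ ≺ γ'` iff the `ω`-weight of `γ` is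
smaller than that of `γ'`, or the weights are equal and the rightmost nonzero entry of
`γ − γ'` is negative. -/
def prec9 (m : ℕ) (ω : ℕ → ℕ) (γ γ' : Fin (m + 1) →₀ ℕ) : Prop :=
  (∑ i : Fin (m + 1), γ i * ω (i : ℕ)) < (∑ i : Fin (m + 1), γ' i * ω (i : ℕ)) ∨
  ((∑ i : Fin (m + 1), γ i * ω (i : ℕ)) = (∑ i : Fin (m + 1), γ' i * ω (i : ℕ)) ∧
    ∃ i : Fin (m + 1), γ i < γ' i ∧ ∀ i' : Fin (m + 1), i < i' → γ i' = γ' i')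

open Fin.NatCast

open MvPolynomial

section MonomialOrder

variable {m : ℕ} (ω : ℕ → ℕ)

noncomputable def prec9Key (γ : Fin (m + 1) →₀ ℕ) : ℕ ×ₗ Lex ((Fin (m + 1))ᵒᵈ → ℕ) :=
  toLex (Finsupp.weight (fun i : Fin (m + 1) => ω i) γ, toLex fun i => γ (OrderDual.ofDual i))

lemma prec9Key_injective : Function.Injective (prec9Key (m := m) ω) := fun _ _ h =>
  Finsupp.ext fun i => congrFun (congrArg (fun x => ofLex (ofLex x).2) h) (OrderDual.toDual i)

lemma prec9Key_add (γ τ : Fin (m + 1) →₀ ℕ) :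
    prec9Key ω (γ + τ) = prec9Key ω γ + prec9Key ω τ := by
  simp only [prec9Key, map_add, Finsupp.coe_add, Pi.add_apply]
  rfl

lemma prec9_eq_onFun : prec9 m ω = Function.onFun (· < ·) (prec9Key ω) := by
  ext γ γ'
  simp only [Function.onFun, prec9, prec9Key, Prod.Lex.toLex_lt_toLex, Finsupp.weight_apply,
    smul_eq_mul]
  rw [Finsupp.sum_fintype _ _ (by simp), Finsupp.sum_fintype _ _ (by simp)]
  refine or_congr Iff.rfl (and_congr Iff.rfl ⟨?_, ?_⟩)
  · rintro ⟨i, hi, habove⟩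
    exact ⟨OrderDual.toDual i, fun i' hi' => habove _ hi', hi⟩
  · rintro ⟨i, habove, hi⟩
    exact ⟨OrderDual.ofDual i, hi, fun i' hi' => habove (OrderDual.toDual i') hi'⟩

lemma prec9_isStrictTotalOrder : IsStrictTotalOrder (Fin (m + 1) →₀ ℕ) (prec9 m ω) :=
  prec9_eq_onFun ω ▸ (prec9Key_injective ω).isStrictTotalOrder_onFun (· < ·)

lemma wellFounded_prec9 : WellFounded (prec9 m ω) :=
  prec9_eq_onFun ω ▸ InvImage.wf (prec9Key ω) wellFounded_lt

lemma prec9_add_right {γ γ' : Fin (m + 1) →₀ ℕ} (τ : Fin (m + 1) →₀ ℕ) (h : prec9 m ω γ γ') :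
    prec9 m ω (γ + τ) (γ' + τ) := by
  rw [prec9_eq_onFun] at h ⊢
  simpa only [Function.onFun, prec9Key_add] using add_lt_add_left h (prec9Key ω τ)

lemma Finset.exists_prec9_greatest {s : Finset (Fin (m + 1) →₀ ℕ)} (hs : s.Nonempty) :
    ∃ μ ∈ s, ∀ γ ∈ s, γ ≠ μ → prec9 m ω γ μ := by
  obtain ⟨μ, hμ, hmax⟩ := s.exists_max_image (prec9Key ω) hs
  rw [prec9_eq_onFun]
  exact ⟨μ, hμ, fun γ hγ hne => (hmax γ hγ).lt_of_ne fun h => hne (prec9Key_injective ω h)⟩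

end MonomialOrder

section GroupAlgebra

variable {σ R G : Type*} [CommSemiring R] [AddCommMonoid G]

theorem aeval_single_monomial (f : (σ →₀ ℕ) →+ G) (a : σ → R) (γ : σ →₀ ℕ) (z : R) :
    aeval (fun i => AddMonoidAlgebra.single (f (Finsupp.single i 1)) (a i)) (monomial γ z) =
      AddMonoidAlgebra.single (f γ) (z * γ.prod fun i k => a i ^ k) := by
  have hf : f γ = γ.sum fun i k => k • f (Finsupp.single i 1) := by
    simp_rw [← map_nsmul, Finsupp.smul_single_one, ← map_finsuppSum, Finsupp.sum_single]
  simp [aeval_monomial, AddMonoidAlgebra.single_pow, hf, AddMonoidAlgebra.single_mul_single]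

theorem coeff_aeval_single (f : (σ →₀ ℕ) →+ G) (a : σ → R) (F : MvPolynomial σ R)
    {μ : σ →₀ ℕ} (hμ : ∀ γ ∈ F.support, γ ≠ μ → f γ ≠ f μ) :
    (aeval (fun i => AddMonoidAlgebra.single (f (Finsupp.single i 1)) (a i)) F).coeff (f μ) =
      F.coeff μ * μ.prod fun i k => a i ^ k := by
  classical
  conv_lhs => rw [← F.support_sum_monomial_coeff]
  simp only [map_sum, aeval_single_monomial, AddMonoidAlgebra.coeff_sum,
    AddMonoidAlgebra.coeff_single, Finsupp.finsetSum_apply, Finsupp.single_apply]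
  rw [Finset.sum_eq_single μ (fun γ hγ hne => if_neg (hμ γ hγ hne))
    (fun h => by simp [notMem_support_iff.mp h]), if_pos rfl]

end GroupAlgebra

theorem exists_pivot_of_mem_span {ι κ R : Type*} [LinearOrder ι] [CommRing R] [NoZeroDivisors R]
    {v : κ → ι → R} {t : κ → ι} {s : Set κ} (hts : Set.InjOn t s)
    (hv : ∀ k ∈ s, ∀ i, t k < i → v k i = 0) (hvt : ∀ k ∈ s, v k (t k) ≠ 0)
    {w : ι → R} (hw : w ∈ Submodule.span R (v '' s)) (hw0 : w ≠ 0) :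
    ∃ k ∈ s, w (t k) ≠ 0 ∧ v k (t k) ∣ w (t k) ∧ ∀ i, t k < i → w i = 0 := by
  classical
  obtain ⟨l, hls, rfl⟩ := (Finsupp.mem_span_image_iff_linearCombination R).mp hw
  have hl : l.support.Nonempty := by
    rw [Finsupp.support_nonempty_iff]
    rintro rfl
    exact hw0 (map_zero _)
  obtain ⟨k, hk, hmax⟩ := l.support.exists_max_image t hl
  have hks : k ∈ s := hls hk
  have hpivot : ∀ i, t k ≤ i → Finsupp.linearCombination R v l i = l k * v k i := by
    intro i hi
    rw [Finsupp.linearCombination_apply, Finsupp.sum, Finset.sum_apply,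
      Finset.sum_eq_single k _ (fun h => absurd hk h), Pi.smul_apply, smul_eq_mul]
    intro j hj hjk
    have hlt : t j < t k := (hmax j hj).lt_of_ne fun h => hjk (hts (hls hj) hks h)
    rw [Pi.smul_apply, hv j (hls hj) i (hlt.trans_le hi), smul_zero]
  refine ⟨k, hks, ?_, ⟨l k, by rw [hpivot _ le_rfl, mul_comm]⟩, fun i hi => ?_⟩
  · rw [hpivot _ le_rfl]
    exact mul_ne_zero (Finsupp.mem_support_iff.mp hk) (hvt k hks)
  · rw [hpivot i hi.le, hv k hks i hi, mul_zero]

noncomputable def logRoot (p : ℕ → ℕ) (β : ℕ → ℕ → ℕ) (c : ℕ → ℂ) : ℕ → ℂ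
  | j => (Complex.log (c j) + ∑ i : Fin j, β j i * logRoot p β c i) / p j

theorem exists_pow_eq_mul_prod (p : ℕ → ℕ) (β : ℕ → ℕ → ℕ) {c : ℕ → ℂ} (hc : ∀ j, c j ≠ 0) :
    ∃ a : ℕ → ℂ, (∀ i, a i ≠ 0) ∧
      ∀ j, p j ≠ 0 → a j ^ p j = c j * ∏ i ∈ Finset.range j, a i ^ β j i := by
  refine ⟨fun i => Complex.exp (logRoot p β c i), fun i => Complex.exp_ne_zero _, fun j hj => ?_⟩
  rw [← Complex.exp_nat_mul, logRoot, mul_div_cancel₀ _ (Nat.cast_ne_zero.mpr hj), Complex.exp_add,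
    Complex.exp_log (hc j), Complex.exp_sum,
    ← Fin.prod_univ_eq_prod_range (fun i => Complex.exp (logRoot p β c i) ^ β j i)]
  simp_rw [← Complex.exp_nat_mul]

section Binomials

variable {m : ℕ} {p : ℕ → ℕ} {β : ℕ → ℕ → ℕ} {j : ℕ}

def relationVector (m : ℕ) (p : ℕ → ℕ) (β : ℕ → ℕ → ℕ) (j : ℕ) : Fin (m + 1) → ℤ :=
  p j • Pi.single (j : Fin (m + 1)) 1 - ∑ i ∈ Finset.range j, β j i • Pi.single (i : Fin (m + 1)) 1

def relationLattice (m : ℕ) (p : ℕ → ℕ) (β : ℕ → ℕ → ℕ) : Submodule ℤ (Fin (m + 1) → ℤ) :=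
  Submodule.span ℤ (relationVector m p β '' Set.Icc 1 (m - 1))

lemma relationVector_apply_of_le {i : Fin (m + 1)} (hi : j ≤ i) :
    relationVector m p β j i = if i = (j : Fin (m + 1)) then (p j : ℤ) else 0 := by
  have hlow : (∑ k ∈ Finset.range j,
      β j k • (Pi.single (k : Fin (m + 1)) 1 : Fin (m + 1) → ℤ)) i = 0 := by
    rw [Finset.sum_apply]
    refine Finset.sum_eq_zero fun k hk => ?_
    rw [Finset.mem_range] at hk
    rw [Pi.smul_apply, Pi.single_eq_of_ne (fun h => ?_), smul_zero]
    rw [h, Fin.val_cast_of_lt (by omega)] at hi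
    omega
  rw [relationVector, Pi.sub_apply, hlow, sub_zero, Pi.smul_apply, Pi.single_apply]
  split_ifs <;> simp

lemma relationVector_apply_self (hj : j ≤ m) : relationVector m p β j j = p j := by
  rw [relationVector_apply_of_le (Fin.val_cast_of_lt (Nat.lt_succ_of_le hj)).ge, if_pos rfl]

lemma relationVector_apply_of_lt (hj : j ≤ m) {i : Fin (m + 1)} (hi : (j : Fin (m + 1)) < i) :
    relationVector m p β j i = 0 := by
  rw [relationVector_apply_of_le, if_neg hi.ne']
  rw [Fin.lt_def, Fin.val_cast_of_lt (Nat.lt_succ_of_le hj)] at hi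
  exact hi.le

lemma relationLattice_le_ker {ω : ℕ → ℕ}
    (hrel : ∀ j, 1 ≤ j → j ≤ m - 1 → p j * ω j = ∑ i ∈ Finset.range j, β j i * ω i) :
    relationLattice m p β ≤
      LinearMap.ker (Fintype.linearCombination ℤ fun i : Fin (m + 1) => (ω i : ℤ)) := by
  rw [relationLattice, Submodule.span_le]
  rintro _ ⟨j, ⟨hj1, hj2⟩, rfl⟩
  have hmod : ∀ i ≤ j, i % (m + 1) = i := fun i hi => Nat.mod_eq_of_lt (by omega)
  simp only [SetLike.mem_coe, LinearMap.mem_ker, relationVector, map_sub, map_nsmul, map_sum,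
    Fintype.linearCombination_apply_single, Fin.val_natCast, hmod j le_rfl, one_smul]
  simp only [nsmul_eq_mul, sub_eq_zero]
  rw [Finset.sum_congr rfl fun i hi => by rw [hmod i (Finset.mem_range.mp hi).le]]
  exact_mod_cast hrel j hj1 hj2

noncomputable def expVec (m : ℕ) : (Fin (m + 1) →₀ ℕ) →+ (Fin (m + 1) → ℤ) :=
  Finsupp.coeFnAddHom.comp (Finsupp.mapRange.addMonoidHom (Nat.castAddMonoidHom ℤ))

@[simp] lemma expVec_apply (γ : Fin (m + 1) →₀ ℕ) (i : Fin (m + 1)) : expVec m γ i = γ i := by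
  simp [expVec]

noncomputable def expClass (m : ℕ) (p : ℕ → ℕ) (β : ℕ → ℕ → ℕ) :
    (Fin (m + 1) →₀ ℕ) →+ (Fin (m + 1) → ℤ) ⧸ relationLattice m p β :=
  (relationLattice m p β).mkQ.toAddMonoidHom.comp (expVec m)

lemma expClass_single (i : Fin (m + 1)) :
    expClass m p β (Finsupp.single i 1) = (relationLattice m p β).mkQ (Pi.single i 1) := by
  have : expVec m (Finsupp.single i 1) = Pi.single i 1 := by
    ext i'
    simp [Finsupp.single_apply, Pi.single_apply, eq_comm]
  rw [expClass, AddMonoidHom.comp_apply, this]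
  rfl

lemma nsmul_expClass_single_eq_sum (hj1 : 1 ≤ j) (hj2 : j ≤ m - 1) :
    p j • expClass m p β (Finsupp.single (j : Fin (m + 1)) 1) =
      ∑ i ∈ Finset.range j, β j i • expClass m p β (Finsupp.single (i : Fin (m + 1)) 1) := by
  have h : (relationLattice m p β).mkQ (relationVector m p β j) = 0 :=
    (Submodule.Quotient.mk_eq_zero _).mpr (Submodule.subset_span ⟨j, ⟨hj1, hj2⟩, rfl⟩)
  simp only [relationVector, map_sub, map_nsmul, map_sum, sub_eq_zero] at h
  simpa only [expClass_single] using h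

lemma weight_eq_of_expClass_eq {ω : ℕ → ℕ}
    (hrel : ∀ j, 1 ≤ j → j ≤ m - 1 → p j * ω j = ∑ i ∈ Finset.range j, β j i * ω i)
    {γ μ : Fin (m + 1) →₀ ℕ} (h : expClass m p β γ = expClass m p β μ) :
    ∑ i : Fin (m + 1), γ i * ω i = ∑ i : Fin (m + 1), μ i * ω i := by
  have := relationLattice_le_ker hrel ((Submodule.Quotient.eq _).mp h)
  simp only [LinearMap.mem_ker, Fintype.linearCombination_apply, Pi.sub_apply, expVec_apply,
    Int.zsmul_eq_mul, sub_mul, Finset.sum_sub_distrib, sub_eq_zero] at this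
  exact_mod_cast this

lemma exists_pivot_of_expClass_eq (hp : ∀ j, 1 ≤ j → j ≤ m - 1 → p j ≠ 0)
    {γ μ : Fin (m + 1) →₀ ℕ} (h : expClass m p β γ = expClass m p β μ) (hne : γ ≠ μ) :
    ∃ j, 1 ≤ j ∧ j ≤ m - 1 ∧ γ (j : Fin (m + 1)) ≠ μ j ∧
      (p j : ℤ) ∣ γ (j : Fin (m + 1)) - μ j ∧ ∀ i, (j : Fin (m + 1)) < i → γ i = μ i := by
  have hval : ∀ j ∈ Set.Icc 1 (m - 1), ((j : Fin (m + 1)) : ℕ) = j := fun j hj =>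
    Fin.val_cast_of_lt (by grind)
  have hw0 : expVec m γ - expVec m μ ≠ 0 := fun h0 => hne <| Finsupp.ext fun i => by
    simpa [sub_eq_zero] using congrFun h0 i
  obtain ⟨j, ⟨hj1, hj2⟩, hjne, hdvd, hzero⟩ :=
    exists_pivot_of_mem_span (t := fun j : ℕ => (j : Fin (m + 1)))
      (fun j hj k hk hjk => by rw [← hval j hj, ← hval k hk]; exact congrArg Fin.val hjk)
      (fun j hj i hi => relationVector_apply_of_lt (by grind) hi)
      (fun j hj => by rw [relationVector_apply_self (by grind)]; exact_mod_cast hp j hj.1 hj.2)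
      ((Submodule.Quotient.eq _).mp h) hw0
  rw [relationVector_apply_self (by omega)] at hdvd
  refine ⟨j, hj1, hj2, fun h' => hjne (by simp [h']), by simpa using hdvd, fun i hi => ?_⟩
  simpa [sub_eq_zero] using hzero i hi

lemma not_prec9_of_expClass_eq {ω : ℕ → ℕ}
    (hrel : ∀ j, 1 ≤ j → j ≤ m - 1 → p j * ω j = ∑ i ∈ Finset.range j, β j i * ω i)
    {γ μ : Fin (m + 1) →₀ ℕ} (hμ : ∀ j, 1 ≤ j → j ≤ m - 1 → μ (j : Fin (m + 1)) < p j)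
    (h : expClass m p β γ = expClass m p β μ) : ¬ prec9 m ω γ μ := by
  rintro (hlt | ⟨-, i, hi, habove⟩)
  · exact hlt.ne (weight_eq_of_expClass_eq hrel h)
  obtain ⟨j, hj1, hj2, hjne, hdvd, hzero⟩ := exists_pivot_of_expClass_eq
    (fun j hj1 hj2 => Nat.ne_zero_of_lt (hμ j hj1 hj2)) h (by rintro rfl; omega)
  obtain rfl : i = j := le_antisymm (not_lt.mp fun hji => hi.ne (hzero i hji))
    (not_lt.mp fun hij => hjne (habove _ hij))
  -- `γ_j - μ_j` is a negative multiple of `p_j > μ_j`, which would force `γ_j < 0`.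
  have := Int.le_of_dvd (by omega) (dvd_neg.mpr hdvd)
  have := hμ j hj1 hj2
  omega

noncomputable def latticeEval (m : ℕ) (p : ℕ → ℕ) (β : ℕ → ℕ → ℕ) (a : ℕ → ℂ) :
    MvPolynomial (Fin (m + 1)) ℂ →ₐ[ℂ]
      AddMonoidAlgebra ℂ ((Fin (m + 1) → ℤ) ⧸ relationLattice m p β) :=
  aeval fun i => AddMonoidAlgebra.single (expClass m p β (Finsupp.single i 1)) (a i)

lemma latticeEval_binomial {a : ℕ → ℂ} {c : ℂ} (hj1 : 1 ≤ j) (hj2 : j ≤ m - 1)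
    (ha : a j ^ p j = c * ∏ i ∈ Finset.range j, a i ^ β j i) :
    latticeEval m p β a (X (j : Fin (m + 1)) ^ p j -
      C c * ∏ i ∈ Finset.range j, X (i : Fin (m + 1)) ^ β j i) = 0 := by
  have hmod : ∀ i ≤ j, i % (m + 1) = i := fun i hi => Nat.mod_eq_of_lt (by omega)
  simp only [latticeEval, map_sub, map_pow, map_mul, map_prod, aeval_X, algHom_C,
    Fin.val_natCast, AddMonoidAlgebra.coe_algebraMap, Algebra.algebraMap_self, RingHom.coe_id,
    Function.comp_apply, id_eq, AddMonoidAlgebra.single_pow, AddMonoidAlgebra.prod_single,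
    AddMonoidAlgebra.single_mul_single, zero_add]
  rw [nsmul_expClass_single_eq_sum hj1 hj2, hmod j le_rfl, ha, sub_eq_zero]
  congr 2
  exact Finset.prod_congr rfl fun i hi => by rw [hmod i (Finset.mem_range.mp hi).le]

end Binomials

theorem stmt9_general (m : ℕ)
    (ω : ℕ → ℕ)
    (p : ℕ → ℕ) (hp : ∀ j, 1 ≤ j → j ≤ m - 1 → 2 ≤ p j)
    (c : ℕ → ℂˣ) (β : ℕ → ℕ → ℕ)
    (hrel : ∀ j, 1 ≤ j → j ≤ m - 1 → p j * ω j = ∑ i ∈ Finset.range j, β j i * ω i)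
    (H : ℕ → MvPolynomial (Fin (m + 1)) ℂ)
    (hH : ∀ j, 1 ≤ j → j ≤ m - 1 →
      H (j + 1) = MvPolynomial.X (j : Fin (m + 1)) ^ p j
        - MvPolynomial.C ((c j : ℂ)) *
            ∏ i ∈ Finset.range j, MvPolynomial.X (i : Fin (m + 1)) ^ β j i) :
    (IsStrictTotalOrder (Fin (m + 1) →₀ ℕ) (prec9 m ω) ∧
      WellFounded (prec9 m ω) ∧
      ∀ γ γ' τ : Fin (m + 1) →₀ ℕ, prec9 m ω γ γ' → prec9 m ω (γ + τ) (γ' + τ)) ∧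
    ∀ F ∈ Ideal.span {h : MvPolynomial (Fin (m + 1)) ℂ | ∃ j, 1 ≤ j ∧ j ≤ m - 1 ∧ h = H (j + 1)},
      F ≠ 0 → ∃ μ ∈ F.support,
        (∀ γ ∈ F.support, γ ≠ μ → prec9 m ω γ μ) ∧
        ∃ j, 1 ≤ j ∧ j ≤ m - 1 ∧ p j ≤ μ (j : Fin (m + 1)) := by
  refine ⟨⟨prec9_isStrictTotalOrder ω, wellFounded_prec9 ω, fun _ _ τ => prec9_add_right ω τ⟩, ?_⟩
  intro F hF hF0
  obtain ⟨μ, hμ, hmax⟩ := Finset.exists_prec9_greatest ω (support_nonempty.mpr hF0)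
  refine ⟨μ, hμ, hmax, ?_⟩
  by_contra! hreduced
  obtain ⟨a, ha0, ha⟩ := exists_pow_eq_mul_prod p β fun j => (c j).ne_zero
  have hF_ker : latticeEval m p β a F = 0 := by
    refine (Ideal.span_le (I := RingHom.ker (latticeEval m p β a))).mpr ?_ hF
    rintro _ ⟨j, hj1, hj2, rfl⟩
    rw [SetLike.mem_coe, RingHom.mem_ker, hH j hj1 hj2]
    exact latticeEval_binomial hj1 hj2 (ha j (by have := hp j hj1 hj2; omega))
  have hcoeff := coeff_aeval_single (expClass m p β) (fun i => a i) F fun γ hγ hne h =>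
    not_prec9_of_expClass_eq hrel hreduced h (hmax γ hγ hne)
  rw [← latticeEval, hF_ker, AddMonoidAlgebra.coeff_zero, Finsupp.zero_apply] at hcoeff
  have ha_prod : (μ.prod fun i k => a i ^ k) ≠ 0 :=
    Finsupp.prod_ne_zero_iff.mpr fun i _ => pow_ne_zero _ (ha0 i)
  exact mul_ne_zero (mem_support_iff.mp hμ) ha_prod hcoeff.symm

/-- Let `m ≥ 2`, `ω 0, …, ω m` positive, and for `1 ≤ j ≤ m - 1` let
`p j ≥ 2`, `c j ∈ ℂˣ`, `β j i < p i` (for `1 ≤ i ≤ j - 1`) with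
`p j · ω j = ∑_{i=0}^{j-1} β j i · ω i`, and
`H (j+1) = y_j ^ p j − c j · x ^ β j 0 · y₁ ^ β j 1 ⋯ y_{j-1} ^ β j (j-1)` in
`ℂ[x,y₁,…,y_m]`.  Then `≺` is a monomial well-order compatible with multiplication, and
`{H 2, …, H m}` is a Gröbner basis of the ideal it generates: the `≺`-greatest monomial of
any nonzero `F` in that ideal is divisible by `y_j ^ p j` for some `1 ≤ j ≤ m - 1`. -/
theorem stmt9 (m : ℕ) (hm : 2 ≤ m)
    (ω : ℕ → ℕ) (hω : ∀ i, i ≤ m → 0 < ω i)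
    (p : ℕ → ℕ) (hp : ∀ j, 1 ≤ j → j ≤ m - 1 → 2 ≤ p j)
    (c : ℕ → ℂˣ) (β : ℕ → ℕ → ℕ)
    (hβ : ∀ j, 1 ≤ j → j ≤ m - 1 → ∀ i, 1 ≤ i → i ≤ j - 1 → β j i < p i)
    (hrel : ∀ j, 1 ≤ j → j ≤ m - 1 → p j * ω j = ∑ i ∈ Finset.range j, β j i * ω i)
    (H : ℕ → MvPolynomial (Fin (m + 1)) ℂ)
    (hH : ∀ j, 1 ≤ j → j ≤ m - 1 →
      H (j + 1) = MvPolynomial.X (j : Fin (m + 1)) ^ p j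
        - MvPolynomial.C ((c j : ℂ)) *
            ∏ i ∈ Finset.range j, MvPolynomial.X (i : Fin (m + 1)) ^ β j i) :
    (IsStrictTotalOrder (Fin (m + 1) →₀ ℕ) (prec9 m ω) ∧
      WellFounded (prec9 m ω) ∧
      ∀ γ γ' τ : Fin (m + 1) →₀ ℕ, prec9 m ω γ γ' → prec9 m ω (γ + τ) (γ' + τ)) ∧
    ∀ F ∈ Ideal.span {h : MvPolynomial (Fin (m + 1)) ℂ | ∃ j, 1 ≤ j ∧ j ≤ m - 1 ∧ h = H (j + 1)},
      F ≠ 0 → ∃ μ ∈ F.support,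
        (∀ γ ∈ F.support, γ ≠ μ → prec9 m ω γ μ) ∧
        ∃ j, 1 ≤ j ∧ j ≤ m - 1 ∧ p j ≤ μ (j : Fin (m + 1)) :=
  stmt9_general m ω p hp c β hrel H hH
end

section
/- Let p_0 := 1 and let p_1,…,p_l be positive integers with p := p_1·p_2⋯p_l. Let φ ∈ K = HahnSeries ℚ ℂ be p-supported and let ζ ∈ ℂ be a primitive p-th root of unity. Then for all integers m, n with 0 ≤ m < n ≤ l, one has f_φ^{[p_0p_1⋯p_n]} = ∏_{i=0}^{p_{m+1}⋯p_n − 1} ζ^{i·p_0p_1⋯p_m} ⋆_p ( f_φ^{[p_0p_1⋯p_m]} ), where ⋆_p is applied coefficientwise to polynomials in y. -/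
noncomputable section

/-- Degree-wise Puiseux series are modeled by Hahn series over `ℚ` with complex
coefficients (substituting `x = t⁻¹`). -/
abbrev K : Type := HahnSeries ℚ ℂ

/-- `φ` is `r`-supported if `r • s` is an integer for every `s` in the support of `φ`. -/
def RSupported (r : ℕ) (φ : K) : Prop :=
  ∀ s ∈ φ.support, ∃ m : ℤ, (r : ℚ) * s = (m : ℚ)

/-- The star operation `c ⋆_r φ`: the coefficient at `s` is `c ^ (r·s)` (an integer power,
here written `c ^ ⌊r·s⌋`, which agrees with `c ^ (r·s)` whenever `r·s ∈ ℤ`, in particular on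
the support of an `r`-supported series) times the coefficient of `φ` at `s`. -/
def hstar (c : ℂˣ) (r : ℕ) (φ : K) : K where
  coeff s := (c : ℂ) ^ ⌊(r : ℚ) * s⌋ * φ.coeff s
  isPWO_support' := by
    apply Set.IsPWO.mono φ.isPWO_support
    intro s hs
    simp only [Function.mem_support, ne_eq] at hs ⊢
    intro h
    apply hs
    show (c : ℂ) ^ ⌊(r : ℚ) * s⌋ * φ.coeff s = 0
    rw [h, mul_zero]

/-- The star operation extended coefficientwise to univariate polynomials over `K`. -/
def polyStar (c : ℂˣ) (r : ℕ) (f : Polynomial K) : Polynomial K :=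
  ∑ n ∈ f.support, Polynomial.monomial n (hstar c r (f.coeff n))

/-- `f_φ^{[N]} := ∏_{j=0}^{N-1} (y − ζ^j ⋆_p φ) ∈ K[y]`. -/
def fPow (p : ℕ) (ζ : ℂˣ) (φ : K) (N : ℕ) : Polynomial K :=
  ∏ j ∈ Finset.range N, (Polynomial.X - Polynomial.C (hstar (ζ ^ j) p φ))

/-!
The map `c ⋆_r -` is a ring endomorphism of the `r`-supported series, because on their supports
the exponent `r·s` is an integer and additive in `s`; moreover `c ⋆_r (d ⋆_r φ) = (c d) ⋆_r φ`.
Hence applying `ζ^{iA} ⋆_p` to the coefficients of `f_φ^{[A]}` moves its roots `ζ^j ⋆_p φ`,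
`j < A`, to `ζ^{iA + j} ⋆_p φ`, and cutting `{0, …, AB - 1}` into `B` blocks of length `A` gives
`f_φ^{[AB]} = ∏_{i < B} ζ^{iA} ⋆_p f_φ^{[A]}`.
-/

open Polynomial Finset

theorem Finset.prod_range_mul_eq_prod_prod {M : Type*} [CommMonoid M] (f : ℕ → M) (A B : ℕ) :
    ∏ k ∈ range (A * B), f k = ∏ i ∈ range B, ∏ j ∈ range A, f (i * A + j) := by
  induction B with
  | zero => simp
  | succ B ih =>
    rw [Nat.mul_succ, prod_range_add, ih, prod_range_succ, Nat.mul_comm A B]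

section hstar

variable (c d : ℂˣ) (r : ℕ)

theorem coeff_hstar (φ : K) (s : ℚ) :
    (hstar c r φ).coeff s = (c : ℂ) ^ ⌊(r : ℚ) * s⌋ * φ.coeff s := rfl

theorem support_hstar (φ : K) : (hstar c r φ).support = φ.support := by
  ext s
  simp [HahnSeries.mem_support, coeff_hstar, zpow_ne_zero _ c.ne_zero]

theorem hstar_zero : hstar c r 0 = 0 := by
  ext s
  simp [coeff_hstar]

theorem hstar_one : hstar c r 1 = 1 := by
  ext s
  by_cases hs : s = 0 <;> simp [coeff_hstar, HahnSeries.coeff_one, hs]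

theorem hstar_add (a b : K) : hstar c r (a + b) = hstar c r a + hstar c r b := by
  ext s
  simp [coeff_hstar, mul_add]

theorem hstar_hstar (φ : K) : hstar c r (hstar d r φ) = hstar (c * d) r φ := by
  ext s
  simp only [coeff_hstar, Units.val_mul, mul_zpow]
  ring

variable {r}

theorem RSupported.floor_mul_eq {φ : K} (hφ : RSupported r φ) {s : ℚ} (hs : s ∈ φ.support) :
    ((⌊(r : ℚ) * s⌋ : ℤ) : ℚ) = r * s := by
  obtain ⟨m, hm⟩ := hφ s hs
  rw [hm, Int.floor_intCast]

theorem RSupported.hstar {φ : K} (hφ : RSupported r φ) : RSupported r (hstar c r φ) := by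
  intro s hs
  exact hφ s (support_hstar c r φ ▸ hs)

theorem hstar_mul {a b : K} (ha : RSupported r a) (hb : RSupported r b) :
    hstar c r (a * b) = hstar c r a * hstar c r b := by
  ext s
  rw [coeff_hstar, HahnSeries.coeff_mul, mul_sum,
    HahnSeries.coeff_mul_left' a.isPWO_support (support_hstar c r a).le]
  have hdiag : Finset.antidiagonal a.isPWO_support (hstar c r b).isPWO_support s
      = Finset.antidiagonal a.isPWO_support b.isPWO_support s := by
    ext ij
    simp [support_hstar]
  rw [hdiag]
  refine sum_congr rfl fun ij hij => ?_
  obtain ⟨hi, hj, hsum⟩ := Finset.mem_antidiagonal.mp hij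
  have hexp : (r : ℚ) * s = ((⌊(r : ℚ) * ij.1⌋ + ⌊(r : ℚ) * ij.2⌋ : ℤ) : ℚ) := by
    push_cast
    rw [ha.floor_mul_eq hi, hb.floor_mul_eq hj, ← mul_add, hsum]
  rw [coeff_hstar, coeff_hstar, hexp, Int.floor_intCast, zpow_add₀ c.ne_zero]
  ring

variable (r)

def supportedSubring : Subring K where
  carrier := {φ | RSupported r φ}
  zero_mem' s hs := by simp at hs
  one_mem' s hs := by
    rw [HahnSeries.mem_support, HahnSeries.coeff_one] at hs
    obtain rfl : s = 0 := by by_contra h; simp [h] at hs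
    exact ⟨0, by simp⟩
  add_mem' ha hb s hs := (HahnSeries.support_add_subset _ _ hs).elim (ha s) (hb s)
  neg_mem' ha s hs := ha s (by simpa using hs)
  mul_mem' ha hb s hs := by
    obtain ⟨u, hu, v, hv, rfl⟩ := HahnSeries.support_mul_subset hs
    obtain ⟨mu, hmu⟩ := ha u hu
    obtain ⟨mv, hmv⟩ := hb v hv
    exact ⟨mu + mv, by push_cast; rw [mul_add, hmu, hmv]⟩

def hstarRingHom : supportedSubring r →+* supportedSubring r where
  toFun φ := ⟨hstar c r φ, RSupported.hstar c φ.2⟩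
  map_one' := Subtype.ext (hstar_one c r)
  map_mul' a b := Subtype.ext (hstar_mul c a.2 b.2)
  map_zero' := Subtype.ext (hstar_zero c r)
  map_add' a b := Subtype.ext (hstar_add c r a b)

theorem coeff_polyStar (f : K[X]) (k : ℕ) : (polyStar c r f).coeff k = hstar c r (f.coeff k) := by
  rw [polyStar, finsetSum_coeff]
  simp only [coeff_monomial, sum_ite_eq']
  split_ifs with hk
  · rfl
  · rw [notMem_support_iff.mp hk, hstar_zero]

theorem polyStar_map_subtype (f : (supportedSubring r)[X]) :
    polyStar c r (f.map (supportedSubring r).subtype) =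
      (f.map (hstarRingHom c r)).map (supportedSubring r).subtype := by
  ext k
  simp only [coeff_polyStar, coeff_map]
  rfl

end hstar

section fPow

variable {r : ℕ} (ζ : ℂˣ) {φ : K}

theorem fPow_eq_map_subtype (hφ : RSupported r φ) (N : ℕ) :
    fPow r ζ φ N = (∏ j ∈ range N,
      (X - C (hstarRingHom (ζ ^ j) r ⟨φ, hφ⟩))).map (supportedSubring r).subtype := by
  simp only [fPow, Polynomial.map_prod, Polynomial.map_sub, map_X, map_C]
  rfl

theorem polyStar_fPow (hφ : RSupported r φ) (c : ℂˣ) (N : ℕ) :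
    polyStar c r (fPow r ζ φ N) = ∏ j ∈ range N, (X - C (hstar (c * ζ ^ j) r φ)) := by
  rw [fPow_eq_map_subtype ζ hφ, polyStar_map_subtype]
  simp only [Polynomial.map_prod, Polynomial.map_sub, map_X, map_C]
  exact prod_congr rfl fun j _ => congrArg (X - C ·) (hstar_hstar c (ζ ^ j) r φ)

theorem fPow_mul (hφ : RSupported r φ) (A B : ℕ) :
    fPow r ζ φ (A * B) = ∏ i ∈ range B, polyStar (ζ ^ (i * A)) r (fPow r ζ φ A) := by
  simp only [polyStar_fPow ζ hφ, ← pow_add]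
  exact prod_range_mul_eq_prod_prod _ A B

end fPow

theorem stmt11_general (l : ℕ) (p : ℕ → ℕ)
    (φ : K) (hφ : RSupported (∏ i ∈ Finset.Icc 1 l, p i) φ)
    (ζ : ℂˣ)
    (m n : ℕ) (hmn : m < n) :
    fPow (∏ i ∈ Finset.Icc 1 l, p i) ζ φ (∏ i ∈ Finset.range (n + 1), p i) =
      ∏ i ∈ Finset.range (∏ t ∈ Finset.Icc (m + 1) n, p t),
        polyStar (ζ ^ (i * ∏ t ∈ Finset.range (m + 1), p t)) (∏ i ∈ Finset.Icc 1 l, p i)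
          (fPow (∏ i ∈ Finset.Icc 1 l, p i) ζ φ (∏ t ∈ Finset.range (m + 1), p t)) := by
  have hsplit : ∏ i ∈ range (n + 1), p i =
      (∏ t ∈ range (m + 1), p t) * ∏ t ∈ Icc (m + 1) n, p t := by
    rw [← Ico_add_one_right_eq_Icc, prod_range_mul_prod_Ico p (by omega)]
  rw [hsplit, fPow_mul ζ hφ]

/-- Let `p 0 = 1`, `p 1, …, p l` be positive integers with
`p = p 1 ⋯ p l`, let `φ ∈ K` be `p`-supported and `ζ` a primitive `p`-th root of unity.
Then for all `0 ≤ m < n ≤ l`,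
`f_φ^{[p 0 ⋯ p n]} = ∏_{i=0}^{p (m+1) ⋯ p n − 1} ζ^{i · p 0 ⋯ p m} ⋆_p (f_φ^{[p 0 ⋯ p m]})`,
where `⋆_p` is applied coefficientwise to polynomials in `y`. -/
theorem stmt11 (l : ℕ) (p : ℕ → ℕ) (hp0 : p 0 = 1)
    (hp : ∀ i, 1 ≤ i → i ≤ l → 0 < p i)
    (φ : K) (hφ : RSupported (∏ i ∈ Finset.Icc 1 l, p i) φ)
    (ζ : ℂˣ) (hζ : IsPrimitiveRoot (ζ : ℂ) (∏ i ∈ Finset.Icc 1 l, p i))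
    (m n : ℕ) (hmn : m < n) (hnl : n ≤ l) :
    fPow (∏ i ∈ Finset.Icc 1 l, p i) ζ φ (∏ i ∈ Finset.range (n + 1), p i) =
      ∏ i ∈ Finset.range (∏ t ∈ Finset.Icc (m + 1) n, p t),
        polyStar (ζ ^ (i * ∏ t ∈ Finset.range (m + 1), p t)) (∏ i ∈ Finset.Icc 1 l, p i)
          (fPow (∏ i ∈ Finset.Icc 1 l, p i) ζ φ (∏ t ∈ Finset.range (m + 1), p t)) :=
  stmt11_general l p φ hφ ζ m n hmn
end
end
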